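/- arXiv:2507.23395 — 4 statements merged into one kernel-verified Lean document; each statement's English description precedes it below -/
import Mathlib

section
/- Fix t ≥ 0, a step size γ_t > 0, points x_t, y_t ∈ X, and vectors F̂_t, F̂_{t+1} ∈ ℝ^n. Define y_{t+1} = argmin_{z∈X} [⟨γ_t F̂_t − ∇ψ(x_t), z⟩ + ψ(z)] and x_{t+1} = argmin_{z∈X} [⟨γ_t F̂_{t+1} − ∇ψ(x_t), z⟩ + ψ(z)], and set b_{t+1} = F(y_{t+1}) − F̂_{t+1}, ε_t = ‖F(y_t) − F̂_t‖_*, ε_{t+1} = ‖b_{t+1}‖_*. If ν > 0, then for all z ∈ X and all positive constants w₁, w₂, w₃, w₄: B_ψ(z,x_{t+1}) ≤ B_ψ(z,x_t) − (1 − (2w₁+w₂+w₃+w₄)/α)·B_ψ(x_{t+1},y_{t+1}) + (γ_t² L_ν²/(2w₂))·((2/α)B_ψ(x_t,y_t))^ν − B_ψ(y_{t+1},x_t) + γ_t⟨F(y_{t+1}), z − y_{t+1}⟩ + γ_t⟨b_{t+1}, y_{t+1} − z⟩ + (γ_t² L_ν²/(2w₃))·((2/α)B_ψ(y_{t+1},x_t))^ν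 + (γ_t²/(2w₁))(ε_t² + ε_{t+1}²) + 2γ_t² M_ν²/w₄. -/
open scoped RealInnerProductSpace
open MeasureTheory

/-- The dual norm `‖u‖_* = sup_{‖z‖ ≤ 1} ⟨u,z⟩` associated with a norm `nrm` on `ℝ^n`. -/
noncomputable def dualNorm {n : ℕ} (nrm : EuclideanSpace ℝ (Fin n) → ℝ)
    (u : EuclideanSpace ℝ (Fin n)) : ℝ :=
  sSup {r : ℝ | ∃ z : EuclideanSpace ℝ (Fin n), nrm z ≤ 1 ∧ r = ⟪u, z⟫}

/-- The Bregman divergence `B_ψ(z,x) = ψ(z) − ψ(x) − ⟨∇ψ(x), z−x⟩`. -/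
noncomputable def Bpsi {n : ℕ} (ψ : EuclideanSpace ℝ (Fin n) → ℝ)
    (gψ : EuclideanSpace ℝ (Fin n) → EuclideanSpace ℝ (Fin n))
    (z x : EuclideanSpace ℝ (Fin n)) : ℝ :=
  ψ z - ψ x - ⟪gψ x, z - x⟫

/-- `x` is a minimizer of `f` over the set `X`. -/
def IsArgminOver {n : ℕ} (f : EuclideanSpace ℝ (Fin n) → ℝ)
    (X : Set (EuclideanSpace ℝ (Fin n))) (x : EuclideanSpace ℝ (Fin n)) : Prop :=
  x ∈ X ∧ ∀ z ∈ X, f x ≤ f z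

/-- The dual gap function `G(x) = sup_{z ∈ X} ⟨F(z), x − z⟩`. -/
noncomputable def gapFun {n : ℕ} (X : Set (EuclideanSpace ℝ (Fin n)))
    (F : EuclideanSpace ℝ (Fin n) → EuclideanSpace ℝ (Fin n))
    (x : EuclideanSpace ℝ (Fin n)) : ℝ :=
  sSup {r : ℝ | ∃ z ∈ X, r = ⟪F z, x - z⟫}

/-- The residual `R_γ(x) = (1/γ)(x − P_x(γ F(x)))`, where `P` is the prox mapping. -/
noncomputable def residFun {n : ℕ}
    (P : EuclideanSpace ℝ (Fin n) → EuclideanSpace ℝ (Fin n) → EuclideanSpace ℝ (Fin n))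
    (F : EuclideanSpace ℝ (Fin n) → EuclideanSpace ℝ (Fin n)) (γ : ℝ)
    (x : EuclideanSpace ℝ (Fin n)) : EuclideanSpace ℝ (Fin n) :=
  (1 / γ) • (x - P x (γ • F x))

section auxlemmas
variable {n : ℕ} (nrm : EuclideanSpace ℝ (Fin n) → ℝ)
    (hnrm0 : ∀ x, nrm x = 0 ↔ x = 0)
    (hnrms : ∀ (a : ℝ) (x : EuclideanSpace ℝ (Fin n)), nrm (a • x) = |a| * nrm x)
    (hnrma : ∀ x y, nrm (x + y) ≤ nrm x + nrm y)

include hnrm0 hnrms hnrma in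
lemma nrm_nonneg : ∀ x, 0 ≤ nrm x := by
  intro x
  have h0 : nrm 0 = 0 := (hnrm0 0).mpr rfl
  have hneg : nrm (-x) = nrm x := by
    have := hnrms (-1) x; simpa using this
  have := hnrma x (-x)
  simp only [add_neg_cancel, h0, hneg] at this
  linarith

include hnrms in
lemma nrm_sub_comm : ∀ x y, nrm (x - y) = nrm (y - x) := by
  intro x y
  have := hnrms (-1) (x - y)
  simpa [neg_sub] using this.symm

include hnrm0 hnrms hnrma in
lemma nrm_lower : ∃ c : ℝ, 0 < c ∧ ∀ z, c * ‖z‖ ≤ nrm z := by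
  classical
  by_cases hn : n = 0
  · refine ⟨1, one_pos, ?_⟩
    intro z
    subst hn
    have : z = 0 := Subsingleton.elim z 0
    simp [this, (hnrm0 0).mpr rfl]
  have hC : ∃ C : ℝ, ∀ z, nrm z ≤ C * ‖z‖ := by
    refine ⟨∑ i : Fin n, nrm (EuclideanSpace.single i 1), ?_⟩
    intro z
    have hz : z = ∑ i : Fin n, z i • EuclideanSpace.single i (1:ℝ) := by
      ext j
      rw [show ((∑ x : Fin n, z x • EuclideanSpace.single x (1:ℝ)) j) =
        ∑ x : Fin n, (z x • EuclideanSpace.single x (1:ℝ)) j from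
          by rw [WithLp.ofLp_sum]; exact Finset.sum_apply j Finset.univ _]
      simp [EuclideanSpace.single_apply]
    calc nrm z = nrm (∑ i : Fin n, z i • EuclideanSpace.single i (1:ℝ)) := by rw [← hz]
      _ ≤ ∑ i : Fin n, nrm (z i • EuclideanSpace.single i (1:ℝ)) := by
          refine Finset.le_sum_of_subadditive nrm ((hnrm0 0).mpr rfl).le hnrma _ _
      _ ≤ ∑ i : Fin n, ‖z‖ * nrm (EuclideanSpace.single i (1:ℝ)) := by
          refine Finset.sum_le_sum ?_
          intro i _
          rw [hnrms]
          exact mul_le_mul_of_nonneg_right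
            (by
              rw [← Real.sqrt_sq_eq_abs, EuclideanSpace.norm_eq]
              apply Real.sqrt_le_sqrt
              calc z i ^ 2 = ‖z i‖ ^ 2 := by rw [Real.norm_eq_abs, sq_abs]
                _ ≤ ∑ k : Fin n, ‖z k‖ ^ 2 := Finset.single_le_sum (f := fun k => ‖z k‖^2)
                    (fun k _ => sq_nonneg _) (Finset.mem_univ i) : |z i| ≤ ‖z‖)
            (nrm_nonneg nrm hnrm0 hnrms hnrma _)
      _ = (∑ i : Fin n, nrm (EuclideanSpace.single i 1)) * ‖z‖ := by
          rw [Finset.sum_mul]; exact Finset.sum_congr rfl (fun i _ => mul_comm _ _)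
  obtain ⟨C, hCle⟩ := hC
  have hcont : Continuous nrm := by
    have hlip : LipschitzWith (Real.toNNReal C) nrm := by
      refine LipschitzWith.of_dist_le_mul ?_
      intro x y
      have h1 : nrm x ≤ nrm (x - y) + nrm y := by
        have := hnrma (x - y) y; simpa [sub_add_cancel] using this
      have h2 : nrm y ≤ nrm (y - x) + nrm x := by
        have := hnrma (y - x) x; simpa [sub_add_cancel] using this
      have h3 : nrm (x - y) ≤ C * ‖x - y‖ := hCle _
      have h4 : nrm (y - x) ≤ C * ‖y - x‖ := hCle _
      have h5 : ‖y - x‖ = ‖x - y‖ := by rw [norm_sub_rev]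
      have hC0 : 0 ≤ C := by
        set e : EuclideanSpace ℝ (Fin n) := EuclideanSpace.single (⟨0, Nat.pos_of_ne_zero hn⟩ : Fin n) (1:ℝ) with he
        have h6 := hCle e
        have h7 : (0:ℝ) ≤ nrm e := nrm_nonneg nrm hnrm0 hnrms hnrma _
        have h8 : ‖e‖ = 1 := by rw [he]; simp [EuclideanSpace.norm_single]
        nlinarith
      rw [Real.dist_eq, dist_eq_norm]
      rw [abs_sub_le_iff]
      constructor
      · calc nrm x - nrm y ≤ nrm (x - y) := by linarith
          _ ≤ C * ‖x - y‖ := h3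
          _ ≤ (Real.toNNReal C) * ‖x - y‖ := by
              gcongr; exact Real.le_coe_toNNReal C
      · calc nrm y - nrm x ≤ nrm (y - x) := by linarith
          _ ≤ C * ‖x - y‖ := by rw [← h5]; exact h4
          _ ≤ (Real.toNNReal C) * ‖x - y‖ := by
              gcongr; exact Real.le_coe_toNNReal C
    exact hlip.continuous
  have hsne : (Metric.sphere (0:EuclideanSpace ℝ (Fin n)) 1).Nonempty := by
    refine ⟨EuclideanSpace.single (⟨0, Nat.pos_of_ne_zero hn⟩ : Fin n) (1:ℝ), ?_⟩
    simp [EuclideanSpace.norm_single]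
  obtain ⟨z0, hz0mem, hz0min⟩ :=
    (isCompact_sphere (0:EuclideanSpace ℝ (Fin n)) 1).exists_isMinOn hsne hcont.continuousOn
  have hz0norm : ‖z0‖ = 1 := by simpa using hz0mem
  have hc0 : 0 < nrm z0 := by
    rcases lt_or_eq_of_le (nrm_nonneg nrm hnrm0 hnrms hnrma z0) with h | h
    · exact h
    · exfalso
      have : z0 = 0 := (hnrm0 z0).mp h.symm
      rw [this] at hz0norm; simp at hz0norm
  refine ⟨nrm z0, hc0, ?_⟩
  intro z
  by_cases hz : z = 0
  · simp [hz, (hnrm0 0).mpr rfl]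
  · have hzn : (0:ℝ) < ‖z‖ := norm_pos_iff.mpr hz
    have hmem : (‖z‖⁻¹ • z) ∈ Metric.sphere (0:EuclideanSpace ℝ (Fin n)) 1 := by
      simp [norm_smul, abs_of_pos (inv_pos.mpr hzn), inv_mul_cancel₀ (ne_of_gt hzn)]
    have := hz0min hmem
    simp only [Set.mem_setOf_eq] at this
    have h2 : nrm (‖z‖⁻¹ • z) = ‖z‖⁻¹ * nrm z := by
      rw [hnrms]; rw [abs_of_pos (inv_pos.mpr hzn)]
    rw [h2] at this
    calc nrm z0 * ‖z‖ ≤ (‖z‖⁻¹ * nrm z) * ‖z‖ := by nlinarith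
      _ = nrm z := by field_simp

lemma inner_le_dualNorm (hnrm0 : ∀ x, nrm x = 0 ↔ x = 0)
    (hnrms : ∀ (a : ℝ) (x : EuclideanSpace ℝ (Fin n)), nrm (a • x) = |a| * nrm x)
    (hnn : ∀ x, 0 ≤ nrm x) (hlow : ∃ c : ℝ, 0 < c ∧ ∀ z, c * ‖z‖ ≤ nrm z)
    (u v : EuclideanSpace ℝ (Fin n)) :
    ⟪u, v⟫ ≤ dualNorm nrm u * nrm v := by
  obtain ⟨c, hc, hcl⟩ := hlow
  have hbdd : BddAbove {r : ℝ | ∃ z : EuclideanSpace ℝ (Fin n), nrm z ≤ 1 ∧ r = ⟪u, z⟫} := by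
    refine ⟨‖u‖ / c, ?_⟩
    rintro r ⟨z, hz1, rfl⟩
    have h1 : ⟪u, z⟫ ≤ ‖u‖ * ‖z‖ := real_inner_le_norm u z
    have h2 : ‖z‖ ≤ 1 / c := by
      have := hcl z
      rw [le_div_iff₀ hc]
      nlinarith
    have : ‖u‖ * ‖z‖ ≤ ‖u‖ * (1 / c) := by
      apply mul_le_mul_of_nonneg_left h2 (norm_nonneg u)
    calc ⟪u, z⟫ ≤ ‖u‖ * ‖z‖ := h1
      _ ≤ ‖u‖ * (1/c) := this
      _ = ‖u‖ / c := by ring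
  by_cases hv : nrm v = 0
  · have hv0 : v = 0 := (hnrm0 v).mp hv
    have hn0 : nrm (0:EuclideanSpace ℝ (Fin n)) = 0 := (hnrm0 0).mpr rfl
    rw [hv0, hn0, mul_zero]
    simp
  · have hvpos : 0 < nrm v := lt_of_le_of_ne (hnn v) (Ne.symm hv)
    set t := nrm v
    have hmem : ⟪u, t⁻¹ • v⟫ ∈ {r : ℝ | ∃ z : EuclideanSpace ℝ (Fin n), nrm z ≤ 1 ∧ r = ⟪u, z⟫} := by
      refine ⟨t⁻¹ • v, ?_, rfl⟩
      rw [hnrms, abs_of_pos (inv_pos.mpr hvpos)]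
      rw [inv_mul_cancel₀ (ne_of_gt hvpos)]
    have hle : ⟪u, t⁻¹ • v⟫ ≤ dualNorm nrm u := le_csSup hbdd hmem
    have hsm : ⟪u, t⁻¹ • v⟫ = t⁻¹ * ⟪u, v⟫ := real_inner_smul_right u v t⁻¹
    rw [hsm] at hle
    calc ⟪u, v⟫ = t * (t⁻¹ * ⟪u, v⟫) := by field_simp
      _ ≤ t * dualNorm nrm u := by apply mul_le_mul_of_nonneg_left hle (le_of_lt hvpos)
      _ = dualNorm nrm u * t := mul_comm _ _

end auxlemmas

lemma foc {n : ℕ} (X : Set (EuclideanSpace ℝ (Fin n))) (hXcv : Convex ℝ X)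
    (ψ : EuclideanSpace ℝ (Fin n) → ℝ)
    (gψ : EuclideanSpace ℝ (Fin n) → EuclideanSpace ℝ (Fin n))
    (hgradc : ContinuousOn gψ X)
    (hcvx : ∀ x ∈ X, ∀ z ∈ X, ψ x + ⟪gψ x, z - x⟫ ≤ ψ z)
    (a xs : EuclideanSpace ℝ (Fin n)) (hxs : xs ∈ X)
    (hmin : ∀ z ∈ X, ⟪a, xs⟫ + ψ xs ≤ ⟪a, z⟫ + ψ z) :
    ∀ z ∈ X, 0 ≤ ⟪a + gψ xs, z - xs⟫ := by
  intro z hz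
  set d := z - xs with hd
  have key : ∀ s : ℝ, s ∈ Set.Ioc (0:ℝ) 1 → 0 ≤ ⟪a + gψ (xs + s • d), d⟫ := by
    intro s hs
    obtain ⟨hs0, hs1⟩ := hs
    have hzs : xs + s • d ∈ X := by
      have : xs + s • d = (1 - s) • xs + s • z := by
        rw [hd]; module
      rw [this]
      exact hXcv hxs hz (by linarith) (le_of_lt hs0) (by ring)
    have h1 := hmin _ hzs
    have h2 := hcvx _ hzs xs hxs
    have e1 : ⟪a, xs + s • d⟫ = ⟪a, xs⟫ + s * ⟪a, d⟫ := by
      rw [inner_add_right, real_inner_smul_right]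
    have e2 : ⟪gψ (xs + s • d), xs - (xs + s • d)⟫ = -(s * ⟪gψ (xs + s • d), d⟫) := by
      rw [show xs - (xs + s • d) = (-s) • d by module, real_inner_smul_right]; ring
    rw [e1] at h1
    rw [e2] at h2
    have h3 : 0 ≤ s * ⟪a, d⟫ + s * ⟪gψ (xs + s • d), d⟫ := by linarith
    have h4 : 0 ≤ s * (⟪a, d⟫ + ⟪gψ (xs + s • d), d⟫) := by
      linarith [mul_add s ⟪a, d⟫ ⟪gψ (xs + s • d), d⟫]
    have h5 : 0 ≤ ⟪a, d⟫ + ⟪gψ (xs + s • d), d⟫ := nonneg_of_mul_nonneg_right h4 hs0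
    rw [inner_add_left]
    linarith
  have hne : (nhdsWithin (0:ℝ) (Set.Ioc (0:ℝ) 1)).NeBot := by
    apply mem_closure_iff_nhdsWithin_neBot.mp
    rw [closure_Ioc (one_ne_zero).symm]
    exact ⟨le_refl 0, zero_le_one⟩
  have htend : Filter.Tendsto (fun s : ℝ => ⟪a + gψ (xs + s • d), d⟫)
      (nhdsWithin (0:ℝ) (Set.Ioc (0:ℝ) 1)) (nhds ⟪a + gψ xs, d⟫) := by
    have hmap : Filter.Tendsto (fun s : ℝ => xs + s • d)
        (nhdsWithin (0:ℝ) (Set.Ioc (0:ℝ) 1)) (nhdsWithin xs X) := by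
      rw [tendsto_nhdsWithin_iff]
      constructor
      · have : Filter.Tendsto (fun s : ℝ => xs + s • d) (nhds 0) (nhds (xs + (0:ℝ) • d)) := by
          apply Filter.Tendsto.const_add
          exact (continuous_id.smul continuous_const).tendsto 0
        simp only [zero_smul, add_zero] at this
        exact this.mono_left nhdsWithin_le_nhds
      · filter_upwards [self_mem_nhdsWithin] with s hs
        have : xs + s • d = (1 - s) • xs + s • z := by rw [hd]; module
        rw [this]
        exact hXcv hxs hz (by linarith [hs.2]) (le_of_lt hs.1) (by ring)
    have hg : Filter.Tendsto (fun s : ℝ => gψ (xs + s • d))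
        (nhdsWithin (0:ℝ) (Set.Ioc (0:ℝ) 1)) (nhds (gψ xs)) :=
      (hgradc xs hxs).tendsto.comp hmap
    have : Filter.Tendsto (fun s : ℝ => a + gψ (xs + s • d))
        (nhdsWithin (0:ℝ) (Set.Ioc (0:ℝ) 1)) (nhds (a + gψ xs)) :=
      Filter.Tendsto.const_add a hg
    exact Filter.Tendsto.inner this tendsto_const_nhds
  exact ge_of_tendsto htend (Filter.eventually_of_mem self_mem_nhdsWithin key)

lemma young_ineq (a b w : ℝ) (hw : 0 < w) : a * b ≤ a^2/(2*w) + w*b^2/2 := by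
  rw [← sub_nonneg]
  have h : a^2/(2*w) + w*b^2/2 - a*b = (a - w*b)^2/(2*w) := by
    field_simp; ring
  rw [h]
  positivity

/-- one step of the (stochastic) Popov mirror-prox, basic relation, case `ν > 0`. -/
theorem stmt_3 {n : ℕ}
    (X : Set (EuclideanSpace ℝ (Fin n)))
    (hXne : X.Nonempty) (hXcl : IsClosed X) (hXcv : Convex ℝ X)
    (nrm : EuclideanSpace ℝ (Fin n) → ℝ)
    (hnrm0 : ∀ x, nrm x = 0 ↔ x = 0)
    (hnrms : ∀ (a : ℝ) (x : EuclideanSpace ℝ (Fin n)), nrm (a • x) = |a| * nrm x)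
    (hnrma : ∀ x y, nrm (x + y) ≤ nrm x + nrm y)
    (ψ : EuclideanSpace ℝ (Fin n) → ℝ)
    (gψ : EuclideanSpace ℝ (Fin n) → EuclideanSpace ℝ (Fin n))
    (α : ℝ) (hα : 0 < α)
    (hgrad : ∀ x ∈ X, HasGradientAt ψ (gψ x) x)
    (hgradc : ContinuousOn gψ X)
    (hsc : ∀ x ∈ X, ∀ z ∈ X, ψ x + ⟪gψ x, z - x⟫ + α / 2 * nrm (z - x) ^ 2 ≤ ψ z)
    (F : EuclideanSpace ℝ (Fin n) → EuclideanSpace ℝ (Fin n))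
    (ν L M : ℝ) (hν : 0 < ν) (hL : 0 < L) (hM : 0 ≤ M)
    (hF : ∀ x ∈ X, ∀ y ∈ X, dualNorm nrm (F x - F y) ≤ L * nrm (x - y) ^ ν + M)
    (γ : ℝ) (hγ : 0 < γ)
    (xt yt : EuclideanSpace ℝ (Fin n)) (hxt : xt ∈ X) (hyt : yt ∈ X)
    (Fh1 Fh2 : EuclideanSpace ℝ (Fin n))
    (yn xn : EuclideanSpace ℝ (Fin n))
    (hyn : IsArgminOver (fun z => ⟪γ • Fh1 - gψ xt, z⟫ + ψ z) X yn)
    (hxn : IsArgminOver (fun z => ⟪γ • Fh2 - gψ xt, z⟫ + ψ z) X xn) :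
    ∀ z ∈ X, ∀ w₁ w₂ w₃ w₄ : ℝ, 0 < w₁ → 0 < w₂ → 0 < w₃ → 0 < w₄ →
      Bpsi ψ gψ z xn ≤
        Bpsi ψ gψ z xt
          - (1 - (2 * w₁ + w₂ + w₃ + w₄) / α) * Bpsi ψ gψ xn yn
          + γ ^ 2 * L ^ 2 / (2 * w₂) * ((2 / α) * Bpsi ψ gψ xt yt) ^ ν
          - Bpsi ψ gψ yn xt
          + γ * ⟪F yn, z - yn⟫
          + γ * ⟪F yn - Fh2, yn - z⟫
          + γ ^ 2 * L ^ 2 / (2 * w₃) * ((2 / α) * Bpsi ψ gψ yn xt) ^ ν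
          + γ ^ 2 / (2 * w₁) * (dualNorm nrm (F yt - Fh1) ^ 2 + dualNorm nrm (F yn - Fh2) ^ 2)
          + 2 * γ ^ 2 * M ^ 2 / w₄ := by
  intro z hz w₁ w₂ w₃ w₄ hw₁ hw₂ hw₃ hw₄
  have hnn := nrm_nonneg nrm hnrm0 hnrms hnrma
  have hlow := nrm_lower nrm hnrm0 hnrms hnrma
  have hsub := nrm_sub_comm nrm hnrms
  have CS : ∀ u v, ⟪u, v⟫ ≤ dualNorm nrm u * nrm v :=
    inner_le_dualNorm nrm hnrm0 hnrms hnn hlow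
  have hynX := hyn.1
  have hxnX := hxn.1
  -- plain convexity
  have hcvx : ∀ x ∈ X, ∀ zz ∈ X, ψ x + ⟪gψ x, zz - x⟫ ≤ ψ zz := by
    intro x hx zz hzz
    have h := hsc x hx zz hzz
    have h0 : 0 ≤ α / 2 * nrm (zz - x) ^ 2 :=
      mul_nonneg (by linarith) (sq_nonneg _)
    linarith
  -- three point identity
  have tp : ∀ zz b a : EuclideanSpace ℝ (Fin n),
      ⟪gψ b - gψ a, zz - b⟫ = Bpsi ψ gψ zz a - Bpsi ψ gψ zz b - Bpsi ψ gψ b a := by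
    intro zz b a
    simp only [Bpsi, inner_sub_left, inner_sub_right]
    ring
  -- first order conditions
  have f1 := foc X hXcv ψ gψ hgradc hcvx (γ • Fh2 - gψ xt) xn hxnX
    (fun w hw => hxn.2 w hw) z hz
  have f2 := foc X hXcv ψ gψ hgradc hcvx (γ • Fh1 - gψ xt) yn hynX
    (fun w hw => hyn.2 w hw) xn hxnX
  have e1 : ⟪γ • Fh2 - gψ xt + gψ xn, z - xn⟫
      = γ * ⟪Fh2, z - xn⟫ + ⟪gψ xn - gψ xt, z - xn⟫ := by
    simp only [inner_add_left, inner_sub_left, real_inner_smul_left]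
    ring
  have e2 : ⟪γ • Fh1 - gψ xt + gψ yn, xn - yn⟫
      = γ * ⟪Fh1, xn - yn⟫ + ⟪gψ yn - gψ xt, xn - yn⟫ := by
    simp only [inner_add_left, inner_sub_left, real_inner_smul_left]
    ring
  rw [e1, tp z xn xt] at f1
  rw [e2, tp xn yn xt] at f2
  -- f1 : 0 ≤ γ*⟪Fh2, z - xn⟫ + (B z xt - B z xn - B xn xt)
  -- f2 : 0 ≤ γ*⟪Fh1, xn - yn⟫ + (B xn xt - B xn yn - B yn xt)
  set D := nrm (xn - yn) with hD
  set ε₁ := dualNorm nrm (F yt - Fh1) with hε₁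
  set ε₂ := dualNorm nrm (F yn - Fh2) with hε₂
  set P := nrm (yt - xt) ^ ν with hP
  set Q := nrm (yn - xt) ^ ν with hQ
  have hPnn : 0 ≤ P := Real.rpow_nonneg (hnn _) ν
  have hQnn : 0 ≤ Q := Real.rpow_nonneg (hnn _) ν
  -- Cauchy-Schwarz bounds for the four pieces of the cross term
  have c1 : ⟪F yt - Fh1, yn - xn⟫ ≤ ε₁ * D := by
    calc ⟪F yt - Fh1, yn - xn⟫ ≤ dualNorm nrm (F yt - Fh1) * nrm (yn - xn) := CS _ _
      _ = ε₁ * D := by rw [hsub yn xn, ← hD, ← hε₁]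
  have c4 : ⟪F yn - Fh2, xn - yn⟫ ≤ ε₂ * D := CS _ _
  have c2 : ⟪F yt - F xt, xn - yn⟫ ≤ (L * P + M) * D := by
    calc ⟪F yt - F xt, xn - yn⟫ ≤ dualNorm nrm (F yt - F xt) * nrm (xn - yn) := CS _ _
      _ ≤ (L * P + M) * D := by
          rw [← hD]
          exact mul_le_mul_of_nonneg_right (hF yt hyt xt hxt) (hnn _)
  have c3 : ⟪F xt - F yn, xn - yn⟫ ≤ (L * Q + M) * D := by
    calc ⟪F xt - F yn, xn - yn⟫ ≤ dualNorm nrm (F xt - F yn) * nrm (xn - yn) := CS _ _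
      _ ≤ (L * Q + M) * D := by
          rw [← hD]
          refine mul_le_mul_of_nonneg_right ?_ (hnn _)
          have := hF xt hxt yn hynX
          rwa [hsub xt yn, ← hQ] at this
  -- γ-scaled versions
  have c1' : γ * ⟪F yt - Fh1, yn - xn⟫ ≤ γ * (ε₁ * D) :=
    mul_le_mul_of_nonneg_left c1 hγ.le
  have c2' : γ * ⟪F yt - F xt, xn - yn⟫ ≤ γ * ((L * P + M) * D) :=
    mul_le_mul_of_nonneg_left c2 hγ.le
  have c3' : γ * ⟪F xt - F yn, xn - yn⟫ ≤ γ * ((L * Q + M) * D) :=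
    mul_le_mul_of_nonneg_left c3 hγ.le
  have c4' : γ * ⟪F yn - Fh2, xn - yn⟫ ≤ γ * (ε₂ * D) :=
    mul_le_mul_of_nonneg_left c4 hγ.le
  -- linear identities (γ-scaled)
  have I1 : γ * ⟪Fh1, xn - yn⟫ =
      γ * ⟪F yt - Fh1, yn - xn⟫ + γ * ⟪F yt - F xt, xn - yn⟫
      + γ * ⟪F xt - F yn, xn - yn⟫ + γ * ⟪F yn - Fh2, xn - yn⟫
      + γ * ⟪Fh2, xn - yn⟫ := by
    simp only [inner_sub_left, inner_sub_right]
    ring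
  have I2 : γ * ⟪Fh2, z - xn⟫ =
      γ * ⟪F yn, z - yn⟫ + γ * ⟪F yn - Fh2, yn - z⟫ + γ * ⟪Fh2, yn - xn⟫ := by
    simp only [inner_sub_left, inner_sub_right]
    ring
  have I3 : γ * ⟪Fh2, yn - xn⟫ = -(γ * ⟪Fh2, xn - yn⟫) := by
    simp only [inner_sub_right]
    ring
  -- Young inequalities
  have y1 : γ * ε₁ * D ≤ (γ * ε₁)^2/(2*w₁) + w₁ * D^2/2 := young_ineq _ _ _ hw₁
  have y2 : γ * ε₂ * D ≤ (γ * ε₂)^2/(2*w₁) + w₁ * D^2/2 := young_ineq _ _ _ hw₁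
  have y3 : γ * L * P * D ≤ (γ * L * P)^2/(2*w₂) + w₂ * D^2/2 := young_ineq _ _ _ hw₂
  have y4 : γ * L * Q * D ≤ (γ * L * Q)^2/(2*w₃) + w₃ * D^2/2 := young_ineq _ _ _ hw₃
  have y5 : 2 * γ * M * D ≤ (2 * γ * M)^2/(2*w₄) + w₄ * D^2/2 := young_ineq _ _ _ hw₄
  -- strong convexity consequences
  have sc1 : nrm (yt - xt) ^ 2 ≤ 2/α * Bpsi ψ gψ xt yt := by
    have h := hsc yt hyt xt hxt
    have h2 : α/2 * nrm (xt - yt) ^ 2 ≤ Bpsi ψ gψ xt yt := by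
      simp only [Bpsi]; linarith
    rw [hsub yt xt]
    have h3 := mul_le_mul_of_nonneg_left h2 (le_of_lt (by positivity : (0:ℝ) < 2/α))
    calc nrm (xt - yt) ^ 2 = 2/α * (α/2 * nrm (xt - yt) ^ 2) := by field_simp
      _ ≤ 2/α * Bpsi ψ gψ xt yt := h3
  have sc2 : nrm (yn - xt) ^ 2 ≤ 2/α * Bpsi ψ gψ yn xt := by
    have h := hsc xt hxt yn hynX
    have h2 : α/2 * nrm (yn - xt) ^ 2 ≤ Bpsi ψ gψ yn xt := by
      simp only [Bpsi]; linarith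
    have h3 := mul_le_mul_of_nonneg_left h2 (le_of_lt (by positivity : (0:ℝ) < 2/α))
    calc nrm (yn - xt) ^ 2 = 2/α * (α/2 * nrm (yn - xt) ^ 2) := by field_simp
      _ ≤ 2/α * Bpsi ψ gψ yn xt := h3
  have sc3 : D ^ 2 ≤ 2/α * Bpsi ψ gψ xn yn := by
    have h := hsc yn hynX xn hxnX
    have h2 : α/2 * nrm (xn - yn) ^ 2 ≤ Bpsi ψ gψ xn yn := by
      simp only [Bpsi]; linarith
    have h3 := mul_le_mul_of_nonneg_left h2 (le_of_lt (by positivity : (0:ℝ) < 2/α))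
    rw [hD]
    calc nrm (xn - yn) ^ 2 = 2/α * (α/2 * nrm (xn - yn) ^ 2) := by field_simp
      _ ≤ 2/α * Bpsi ψ gψ xn yn := h3
  -- rpow manipulation : P² ≤ ((2/α) B xt yt)^ν etc.
  have hrpow : ∀ (x b : ℝ), 0 ≤ x → x ^ 2 ≤ b → (x ^ ν) ^ 2 ≤ b ^ ν := by
    intro x b hx hb
    have e : (x ^ ν) ^ (2:ℕ) = (x ^ (2:ℕ)) ^ ν := by
      rw [← Real.rpow_natCast (x ^ ν) 2, ← Real.rpow_natCast x 2,
        ← Real.rpow_mul hx, ← Real.rpow_mul hx]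
      ring_nf
    rw [e]
    exact Real.rpow_le_rpow (by positivity) hb hν.le
  have hP2 : P ^ 2 ≤ (2/α * Bpsi ψ gψ xt yt) ^ ν := by
    rw [hP]; exact hrpow _ _ (hnn _) sc1
  have hQ2 : Q ^ 2 ≤ (2/α * Bpsi ψ gψ yn xt) ^ ν := by
    rw [hQ]; exact hrpow _ _ (hnn _) sc2
  -- scale them
  have hP2' : γ^2 * L^2 / (2*w₂) * (P ^ 2) ≤ γ^2 * L^2 / (2*w₂) * ((2/α * Bpsi ψ gψ xt yt) ^ ν) :=
    mul_le_mul_of_nonneg_left hP2 (by positivity)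
  have hQ2' : γ^2 * L^2 / (2*w₃) * (Q ^ 2) ≤ γ^2 * L^2 / (2*w₃) * ((2/α * Bpsi ψ gψ yn xt) ^ ν) :=
    mul_le_mul_of_nonneg_left hQ2 (by positivity)
  have hSD : (2*w₁ + w₂ + w₃ + w₄)/2 * (D ^ 2)
      ≤ (2*w₁ + w₂ + w₃ + w₄)/α * Bpsi ψ gψ xn yn := by
    calc (2*w₁ + w₂ + w₃ + w₄)/2 * (D ^ 2)
        ≤ (2*w₁ + w₂ + w₃ + w₄)/2 * (2/α * Bpsi ψ gψ xn yn) :=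
          mul_le_mul_of_nonneg_left sc3 (by positivity)
      _ = (2*w₁ + w₂ + w₃ + w₄)/α * Bpsi ψ gψ xn yn := by
          field_simp
  -- final combination
  simp only [div_eq_mul_inv, mul_inv] at f1 f2 c1' c2' c3' c4' I1 I2 I3 y1 y2 y3 y4 y5 hP2' hQ2' hSD ⊢
  linarith [f1, f2, c1', c2', c3', c4', I1, I2, I3, y1, y2, y3, y4, y5, hP2', hQ2', hSD]
end

section
/- Fix t ≥ 0, a step size γ_t > 0, points x_t, y_t ∈ X, and vectors F̂_t, F̂_{t+1} ∈ ℝ^n. Define y_{t+1} = argmin_{z∈X} [⟨γ_t F̂_t − ∇ψ(x_t), z⟩ + ψ(z)] and x_{t+1} = argmin_{z∈X} [⟨γ_t F̂_{t+1} − ∇ψ(x_t), z⟩ + ψ(z)], and set b_{t+1} = F(y_{t+1}) − F̂_{t+1}, ε_t = ‖F(y_t) − F̂_t‖_*, ε_{t+1} = ‖b_{t+1}‖_*. If ν = 0 in the growth condition, then for all z ∈ X and all positive constants w₁, w₂: B_ψ(z,x_{t+1}) ≤ B_ψ(z,x_t) − (1 − (2w₁+w₂)/α)·B_ψ(x_{t+1},y_{t+1})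 − B_ψ(y_{t+1},x_t) + γ_t⟨F(y_{t+1}), z − y_{t+1}⟩ + γ_t⟨b_{t+1}, y_{t+1} − z⟩ + (γ_t²/(2w₁))(ε_t² + ε_{t+1}²) + γ_t²(L₀+M₀)²/(2w₂). -/
open scoped RealInnerProductSpace
open MeasureTheory

section Aux

variable {n : ℕ}

local notation "E" => EuclideanSpace ℝ (Fin n)

lemma my_young (a b w : ℝ) (hw : 0 < w) : a * b ≤ a ^ 2 / (2 * w) + w * b ^ 2 / 2 := by
  have h : a * b ≤ (a ^ 2 + w ^ 2 * b ^ 2) / (2 * w) := by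
    rw [le_div_iff₀ (by positivity)]
    nlinarith [sq_nonneg (a - w * b)]
  have h2 : (a ^ 2 + w ^ 2 * b ^ 2) / (2 * w) = a ^ 2 / (2 * w) + w * b ^ 2 / 2 := by
    field_simp
  linarith [h, h2.le, h2.ge]

lemma nrm_nonneg_s4 (nrm : E → ℝ)
    (h0 : ∀ x, nrm x = 0 ↔ x = 0)
    (hs : ∀ (a : ℝ) x, nrm (a • x) = |a| * nrm x)
    (ha : ∀ x y, nrm (x + y) ≤ nrm x + nrm y) :
    ∀ x, 0 ≤ nrm x := by
  intro x
  have h1 : nrm (-x) = nrm x := by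
    have := hs (-1) x; simpa using this
  have h2 : nrm 0 = 0 := (h0 0).mpr rfl
  have h3 := ha x (-x)
  simp [h2] at h3
  linarith

lemma nrm_sum_le (nrm : E → ℝ)
    (h0 : ∀ x, nrm x = 0 ↔ x = 0)
    (ha : ∀ x y, nrm (x + y) ≤ nrm x + nrm y)
    (s : Finset (Fin n)) (f : Fin n → E) :
    nrm (∑ i ∈ s, f i) ≤ ∑ i ∈ s, nrm (f i) := by
  classical
  induction s using Finset.induction with
  | empty => simp [(h0 0).mpr rfl]
  | insert _ _ hnot ih =>
    rename_i a s
    rw [Finset.sum_insert hnot, Finset.sum_insert hnot]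
    exact le_trans (ha _ _) (by linarith)

end Aux

section Aux2

variable {n : ℕ}

local notation "E" => EuclideanSpace ℝ (Fin n)


lemma coord_le_norm (x : E) (i : Fin n) : |x i| ≤ ‖x‖ := by
  rw [EuclideanSpace.norm_eq]
  rw [show |x i| = Real.sqrt (x i ^ 2) from (Real.sqrt_sq_eq_abs _).symm]
  apply Real.sqrt_le_sqrt
  have := Finset.single_le_sum (f := fun j => ‖x j‖ ^ 2)
    (fun j _ => sq_nonneg _) (Finset.mem_univ i)
  simpa [sq_abs] using this

lemma nrm_lower_s4 (nrm : E → ℝ)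
    (h0 : ∀ x, nrm x = 0 ↔ x = 0)
    (hs : ∀ (a : ℝ) x, nrm (a • x) = |a| * nrm x)
    (ha : ∀ x y, nrm (x + y) ≤ nrm x + nrm y)
    (hne : ∃ w : E, w ≠ 0) :
    ∃ c : ℝ, 0 < c ∧ ∀ z : E, c * ‖z‖ ≤ nrm z := by
  classical
  obtain ⟨w, hw⟩ := hne
  haveI : Nontrivial E := ⟨⟨w, 0, hw⟩⟩
  have hnn := nrm_nonneg_s4 nrm h0 hs ha
  set C : ℝ := ∑ i : Fin n, nrm (EuclideanSpace.single i (1:ℝ)) with hC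
  have hC0 : 0 ≤ C := Finset.sum_nonneg fun i _ => hnn _
  have hub : ∀ x : E, nrm x ≤ C * ‖x‖ := by
    intro x
    have hx : x = ∑ i : Fin n, (x i) • EuclideanSpace.single i (1:ℝ) := by
      ext j
      rw [WithLp.ofLp_sum, Finset.sum_apply]
      simp [EuclideanSpace.single_apply]
    calc nrm x = nrm (∑ i : Fin n, (x i) • EuclideanSpace.single i (1:ℝ)) := by rw [← hx]
      _ ≤ ∑ i : Fin n, nrm ((x i) • EuclideanSpace.single i (1:ℝ)) :=
          nrm_sum_le nrm h0 ha _ _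
      _ = ∑ i : Fin n, |x i| * nrm (EuclideanSpace.single i (1:ℝ)) := by
          simp [hs]
      _ ≤ ∑ i : Fin n, ‖x‖ * nrm (EuclideanSpace.single i (1:ℝ)) := by
          apply Finset.sum_le_sum
          intro i _
          exact mul_le_mul_of_nonneg_right (coord_le_norm x i) (hnn _)
      _ = C * ‖x‖ := by rw [← Finset.mul_sum, mul_comm]
  have hlip : ∀ x y : E, |nrm x - nrm y| ≤ C * ‖x - y‖ := by
    intro x y
    have h1 : nrm x ≤ nrm y + nrm (x - y) := by
      have := ha y (x - y); simpa using this
    have h2 : nrm y ≤ nrm x + nrm (y - x) := by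
      have := ha x (y - x); simpa using this
    have h3 : nrm (y - x) = nrm (x - y) := by
      have := hs (-1) (x - y); simpa [neg_sub] using this
    rw [abs_le]
    constructor
    · have := hub (y - x); rw [h3] at this
      have h4 : ‖y - x‖ = ‖x - y‖ := by rw [norm_sub_rev]
      linarith [hub (y - x), h2, (by rw [← h4] ; exact hub (y-x) : nrm (y-x) ≤ C * ‖x - y‖)]
    · linarith [hub (x - y), h1]
  have hcont : Continuous nrm := by
    have : LipschitzWith C.toNNReal nrm := by
      apply LipschitzWith.of_dist_le_mul
      intro x y
      rw [Real.dist_eq, dist_eq_norm, Real.coe_toNNReal _ hC0]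
      exact hlip x y
    exact this.continuous
  obtain ⟨m, hm, hmin⟩ := (isCompact_sphere (0 : E) 1).exists_isMinOn
    (NormedSpace.sphere_nonempty.mpr zero_le_one) hcont.continuousOn
  have hm0 : m ≠ 0 := by
    intro h
    rw [mem_sphere_iff_norm, h] at hm
    simpa using hm
  have hc : 0 < nrm m := by
    rcases lt_or_eq_of_le (hnn m) with h | h
    · exact h
    · exact absurd ((h0 m).mp h.symm) hm0
  refine ⟨nrm m, hc, fun z => ?_⟩
  by_cases hz : z = 0
  · simp [hz, (h0 0).mpr rfl]
  · have hzn : ‖z‖ ≠ 0 := norm_ne_zero_iff.mpr hz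
    have hunit : (‖z‖⁻¹ • z) ∈ Metric.sphere (0 : E) 1 := by
      rw [mem_sphere_iff_norm, sub_zero, norm_smul, norm_inv, norm_norm]
      field_simp
    have heq : nrm z = ‖z‖ * nrm (‖z‖⁻¹ • z) := by
      have h' := hs ‖z‖ (‖z‖⁻¹ • z)
      rw [smul_inv_smul₀ hzn, abs_of_nonneg (norm_nonneg z)] at h'
      exact h'
    calc nrm m * ‖z‖ = ‖z‖ * nrm m := mul_comm _ _
      _ ≤ ‖z‖ * nrm (‖z‖⁻¹ • z) := mul_le_mul_of_nonneg_left (hmin hunit) (norm_nonneg z)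
      _ = nrm z := heq.symm
end Aux2

section Aux3

variable {n : ℕ}

local notation "E" => EuclideanSpace ℝ (Fin n)

lemma dual_cs (nrm : E → ℝ)
    (h0 : ∀ x, nrm x = 0 ↔ x = 0)
    (hs : ∀ (a : ℝ) x, nrm (a • x) = |a| * nrm x)
    (ha : ∀ x y, nrm (x + y) ≤ nrm x + nrm y)
    (u v : E) :
    ⟪u, v⟫ ≤ dualNorm nrm u * nrm v := by
  by_cases hv : v = 0
  · simp [hv, (h0 0).mpr rfl]
  · have hnn := nrm_nonneg_s4 nrm h0 hs ha
    have hvpos : 0 < nrm v := lt_of_le_of_ne (hnn v) (fun h => hv ((h0 v).mp h.symm))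
    obtain ⟨c, hc, hcl⟩ := nrm_lower_s4 nrm h0 hs ha ⟨v, hv⟩
    have hbdd : BddAbove {r : ℝ | ∃ z : E, nrm z ≤ 1 ∧ r = ⟪u, z⟫} := by
      refine ⟨‖u‖ * (1 / c), ?_⟩
      rintro r ⟨z, hz1, rfl⟩
      have h1 : c * ‖z‖ ≤ 1 := le_trans (hcl z) hz1
      have h2 : ‖z‖ ≤ 1 / c := by rw [le_div_iff₀ hc]; linarith [mul_comm c ‖z‖]
      calc ⟪u, z⟫ ≤ ‖u‖ * ‖z‖ := real_inner_le_norm u z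
        _ ≤ ‖u‖ * (1 / c) := mul_le_mul_of_nonneg_left h2 (norm_nonneg u)
    set t := nrm v with ht
    have hunit : nrm (t⁻¹ • v) = 1 := by
      rw [hs, abs_of_pos (inv_pos.mpr hvpos)]
      field_simp
      exact ht.symm
    have hmem : ⟪u, t⁻¹ • v⟫ ∈ {r : ℝ | ∃ z : E, nrm z ≤ 1 ∧ r = ⟪u, z⟫} :=
      ⟨_, hunit.le, rfl⟩
    have hle : ⟪u, t⁻¹ • v⟫ ≤ dualNorm nrm u := le_csSup hbdd hmem
    have hsm : ⟪u, t⁻¹ • v⟫ = t⁻¹ * ⟪u, v⟫ := real_inner_smul_right u v t⁻¹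
    rw [hsm] at hle
    have h3 := mul_le_mul_of_nonneg_left hle hvpos.le
    rw [mul_inv_cancel_left₀ (ne_of_gt hvpos)] at h3
    linarith [h3, mul_comm t (dualNorm nrm u)]

lemma argmin_vi {X : Set E} (hXcv : Convex ℝ X)
    (ψ : E → ℝ) (a g x : E)
    (hxX : x ∈ X)
    (hmin : ∀ z ∈ X, ⟪a, x⟫ + ψ x ≤ ⟪a, z⟫ + ψ z)
    (hg : HasGradientAt ψ g x) :
    ∀ z ∈ X, 0 ≤ ⟪a + g, z - x⟫ := by
  intro z hz
  set v := z - x with hv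
  have hc : HasDerivAt (fun t : ℝ => x + t • v) v 0 := by
    simpa using ((hasDerivAt_id (0 : ℝ)).smul_const v).const_add x
  have hl : HasFDerivAt ψ ((InnerProductSpace.toDual ℝ _) g) ((fun t : ℝ => x + t • v) 0) := by
    simpa using hg.hasFDerivAt
  have h1 : HasDerivAt (fun t : ℝ => ψ (x + t • v)) ⟪g, v⟫ 0 := by
    have := hl.comp_hasDerivAt (0 : ℝ) hc
    simp [Function.comp, InnerProductSpace.toDual_apply_apply] at this
    exact this
  have hder : HasDerivAt (fun t : ℝ => ψ (x + t • v) + t * ⟪a, v⟫) (⟪g, v⟫ + ⟪a, v⟫) 0 :=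
    h1.add (hasDerivAt_mul_const _)
  set h : ℝ → ℝ := fun t => ψ (x + t • v) + t * ⟪a, v⟫ with hh
  have hmono : ∀ t ∈ Set.Ioo (0:ℝ) 1, h 0 ≤ h t := by
    intro t ht
    have hmem : (1 - t) • x + t • z ∈ X :=
      hXcv hxX hz (by linarith [ht.2]) (le_of_lt ht.1) (by ring)
    have hpt : (1 - t) • x + t • z = x + t • v := by
      rw [hv]; module
    rw [hpt] at hmem
    have := hmin _ hmem
    have hinner : ⟪a, x + t • v⟫ = ⟪a, x⟫ + t * ⟪a, v⟫ := by
      rw [inner_add_right, real_inner_smul_right]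
    simp only [hh]
    simp only [zero_smul, add_zero, zero_mul]
    linarith [this, hinner.le, hinner.ge]
  have htends : Filter.Tendsto (slope h 0) (nhdsWithin 0 (Set.Ioi 0)) (nhds (⟪g, v⟫ + ⟪a, v⟫)) := by
    have := hasDerivAt_iff_tendsto_slope.mp hder
    exact this.mono_left (nhdsWithin_mono _ (by intro t ht; simpa using ne_of_gt ht))
  have hev : ∀ᶠ t in nhdsWithin (0:ℝ) (Set.Ioi 0), 0 ≤ slope h 0 t := by
    filter_upwards [Ioo_mem_nhdsGT_of_mem (by norm_num : (0:ℝ) ∈ Set.Ico (0:ℝ) 1)] with t ht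
    rw [slope_def_field]
    apply div_nonneg
    · linarith [hmono t ht]
    · linarith [ht.1]
  have hd : 0 ≤ ⟪g, v⟫ + ⟪a, v⟫ := ge_of_tendsto htends hev
  rw [inner_add_left]
  linarith

end Aux3

/-- one step of the (stochastic) Popov mirror-prox, basic relation, case `ν = 0`
(bounded variation: `‖F(x) − F(y)‖_* ≤ L₀ + M₀`). -/
theorem stmt_4 {n : ℕ}
    (X : Set (EuclideanSpace ℝ (Fin n)))
    (hXne : X.Nonempty) (hXcl : IsClosed X) (hXcv : Convex ℝ X)
    (nrm : EuclideanSpace ℝ (Fin n) → ℝ)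
    (hnrm0 : ∀ x, nrm x = 0 ↔ x = 0)
    (hnrms : ∀ (a : ℝ) (x : EuclideanSpace ℝ (Fin n)), nrm (a • x) = |a| * nrm x)
    (hnrma : ∀ x y, nrm (x + y) ≤ nrm x + nrm y)
    (ψ : EuclideanSpace ℝ (Fin n) → ℝ)
    (gψ : EuclideanSpace ℝ (Fin n) → EuclideanSpace ℝ (Fin n))
    (α : ℝ) (hα : 0 < α)
    (hgrad : ∀ x ∈ X, HasGradientAt ψ (gψ x) x)
    (hgradc : ContinuousOn gψ X)
    (hsc : ∀ x ∈ X, ∀ z ∈ X, ψ x + ⟪gψ x, z - x⟫ + α / 2 * nrm (z - x) ^ 2 ≤ ψ z)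
    (F : EuclideanSpace ℝ (Fin n) → EuclideanSpace ℝ (Fin n))
    (L M : ℝ) (hL : 0 < L) (hM : 0 ≤ M)
    (hF : ∀ x ∈ X, ∀ y ∈ X, dualNorm nrm (F x - F y) ≤ L + M)
    (γ : ℝ) (hγ : 0 < γ)
    (xt yt : EuclideanSpace ℝ (Fin n)) (hxt : xt ∈ X) (hyt : yt ∈ X)
    (Fh1 Fh2 : EuclideanSpace ℝ (Fin n))
    (yn xn : EuclideanSpace ℝ (Fin n))
    (hyn : IsArgminOver (fun z => ⟪γ • Fh1 - gψ xt, z⟫ + ψ z) X yn)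
    (hxn : IsArgminOver (fun z => ⟪γ • Fh2 - gψ xt, z⟫ + ψ z) X xn) :
    ∀ z ∈ X, ∀ w₁ w₂ : ℝ, 0 < w₁ → 0 < w₂ →
      Bpsi ψ gψ z xn ≤
        Bpsi ψ gψ z xt
          - (1 - (2 * w₁ + w₂) / α) * Bpsi ψ gψ xn yn
          - Bpsi ψ gψ yn xt
          + γ * ⟪F yn, z - yn⟫
          + γ * ⟪F yn - Fh2, yn - z⟫
          + γ ^ 2 / (2 * w₁) * (dualNorm nrm (F yt - Fh1) ^ 2 + dualNorm nrm (F yn - Fh2) ^ 2)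
          + γ ^ 2 * (L + M) ^ 2 / (2 * w₂) := by

  intro z hz w₁ w₂ hw₁ hw₂
  have hynX : yn ∈ X := hyn.1
  have hxnX : xn ∈ X := hxn.1
  have VI1 : ∀ u ∈ X, 0 ≤ ⟪(γ • Fh1 - gψ xt) + gψ yn, u - yn⟫ :=
    argmin_vi hXcv ψ (γ • Fh1 - gψ xt) (gψ yn) yn hynX hyn.2 (hgrad yn hynX)
  have VI2 : ∀ u ∈ X, 0 ≤ ⟪(γ • Fh2 - gψ xt) + gψ xn, u - xn⟫ :=
    argmin_vi hXcv ψ (γ • Fh2 - gψ xt) (gψ xn) xn hxnX hxn.2 (hgrad xn hxnX)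
  have I1 := VI1 xn hxnX
  have I2 := VI2 z hz
  have S1eq : Bpsi ψ gψ z xt - Bpsi ψ gψ z xn - Bpsi ψ gψ xn xt - γ * ⟪Fh2, xn - z⟫
      = ⟪(γ • Fh2 - gψ xt) + gψ xn, z - xn⟫ := by
    simp only [Bpsi, inner_add_left, inner_sub_left, inner_sub_right, real_inner_smul_left]
    ring
  have S2eq : Bpsi ψ gψ xn xt - Bpsi ψ gψ xn yn - Bpsi ψ gψ yn xt - γ * ⟪Fh1, yn - xn⟫
      = ⟪(γ • Fh1 - gψ xt) + gψ yn, xn - yn⟫ := by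
    simp only [Bpsi, inner_add_left, inner_sub_left, inner_sub_right, real_inner_smul_left]
    ring
  have S1 : 0 ≤ Bpsi ψ gψ z xt - Bpsi ψ gψ z xn - Bpsi ψ gψ xn xt - γ * ⟪Fh2, xn - z⟫ := by
    rw [S1eq]; exact I2
  have S2 : 0 ≤ Bpsi ψ gψ xn xt - Bpsi ψ gψ xn yn - Bpsi ψ gψ yn xt - γ * ⟪Fh1, yn - xn⟫ := by
    rw [S2eq]; exact I1
  set N : ℝ := nrm (xn - yn) with hN
  have hN0 : 0 ≤ N := nrm_nonneg_s4 nrm hnrm0 hnrms hnrma _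
  have hNsym : nrm (yn - xn) = N := by
    have := hnrms (-1) (xn - yn)
    simpa [neg_sub] using this
  set D1 : ℝ := dualNorm nrm (F yt - Fh1) with hD1
  set D2 : ℝ := dualNorm nrm (F yn - Fh2) with hD2
  have J1 : ⟪F yt - Fh1, yn - xn⟫ ≤ D1 * N := by
    have := dual_cs nrm hnrm0 hnrms hnrma (F yt - Fh1) (yn - xn)
    rwa [hNsym] at this
  have J2 : ⟪F yn - Fh2, xn - yn⟫ ≤ D2 * N :=
    dual_cs nrm hnrm0 hnrms hnrma (F yn - Fh2) (xn - yn)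
  have J3 : ⟪F yt - F yn, xn - yn⟫ ≤ (L + M) * N := by
    refine le_trans (dual_cs nrm hnrm0 hnrms hnrma (F yt - F yn) (xn - yn)) ?_
    exact mul_le_mul_of_nonneg_right (hF yt hyt yn hynX) hN0
  have K1 : γ * ⟪F yt - Fh1, yn - xn⟫ ≤ γ ^ 2 * D1 ^ 2 / (2 * w₁) + w₁ * N ^ 2 / 2 := by
    have h1 := mul_le_mul_of_nonneg_left J1 hγ.le
    have h2 := my_young (γ * D1) N w₁ hw₁
    have h3 : γ * (D1 * N) = γ * D1 * N := by ring
    have h4 : (γ * D1) ^ 2 / (2 * w₁) = γ ^ 2 * D1 ^ 2 / (2 * w₁) := by rw [mul_pow]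
    linarith
  have K2 : γ * ⟪F yn - Fh2, xn - yn⟫ ≤ γ ^ 2 * D2 ^ 2 / (2 * w₁) + w₁ * N ^ 2 / 2 := by
    have h1 := mul_le_mul_of_nonneg_left J2 hγ.le
    have h2 := my_young (γ * D2) N w₁ hw₁
    have h3 : γ * (D2 * N) = γ * D2 * N := by ring
    have h4 : (γ * D2) ^ 2 / (2 * w₁) = γ ^ 2 * D2 ^ 2 / (2 * w₁) := by rw [mul_pow]
    linarith
  have K3 : γ * ⟪F yt - F yn, xn - yn⟫ ≤ γ ^ 2 * (L + M) ^ 2 / (2 * w₂) + w₂ * N ^ 2 / 2 := by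
    have h1 := mul_le_mul_of_nonneg_left J3 hγ.le
    have h2 := my_young (γ * (L + M)) N w₂ hw₂
    have h3 : γ * ((L + M) * N) = γ * (L + M) * N := by ring
    have h4 : (γ * (L + M)) ^ 2 / (2 * w₂) = γ ^ 2 * (L + M) ^ 2 / (2 * w₂) := by rw [mul_pow]
    linarith
  have SC : α / 2 * N ^ 2 ≤ Bpsi ψ gψ xn yn := by
    have := hsc yn hynX xn hxnX
    simp only [Bpsi]
    linarith
  have K4 : (2 * w₁ + w₂) / 2 * N ^ 2 ≤ (2 * w₁ + w₂) / α * Bpsi ψ gψ xn yn := by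
    have hpos : 0 ≤ (2 * w₁ + w₂) / α := by positivity
    have h5 := mul_le_mul_of_nonneg_left SC hpos
    have heq : (2 * w₁ + w₂) / α * (α / 2 * N ^ 2) = (2 * w₁ + w₂) / 2 * N ^ 2 := by
      field_simp
    linarith
  have Tid : -(γ * ⟪Fh2, xn - z⟫) - γ * ⟪Fh1, yn - xn⟫ =
      γ * ⟪F yn, z - yn⟫ + γ * ⟪F yn - Fh2, yn - z⟫
      + γ * ⟪F yt - Fh1, yn - xn⟫ + γ * ⟪F yt - F yn, xn - yn⟫
      + γ * ⟪F yn - Fh2, xn - yn⟫ := by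
    simp only [inner_sub_left, inner_sub_right]
    ring
  ring_nf at S1 S2 Tid K1 K2 K3 K4 ⊢
  linarith [S1, S2, Tid, K1, K2, K3, K4]
end

section
/- Let the number of iterations T ≥ 0 and c > 0 be fixed. For the deterministic Popov mirror-prox: with constant step size γ_t = c/√(T+1) for all t = 0,…,T, G((1/(T+1)) Σ_{t=0}^{T} y_{t+1}) ≤ (D + c² D̄)/(c√(T+1)); and with diminishing step size γ_t = c/√(t+1), for T ≥ 1, G(Σ_{t=⌊T/2⌋}^{T} γ_t y_{t+1} / Σ_{t=⌊T/2⌋}^{T} γ_t) ≤ (2D + 2 ln(6) c² D̄)/(c√(T+1)). -/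
open scoped RealInnerProductSpace
open MeasureTheory

section auxLemmas

open Filter Topology

variable {n : ℕ}

local notation "E" => EuclideanSpace ℝ (Fin n)

lemma my_nrm_nonneg (nrm : E → ℝ)
    (hnrm0 : ∀ x : E, nrm x = 0 ↔ x = 0)
    (hnrms : ∀ (a : ℝ) (x : E), nrm (a • x) = |a| * nrm x)
    (hnrma : ∀ x y : E, nrm (x + y) ≤ nrm x + nrm y) (x : E) : 0 ≤ nrm x := by
  have h0 : nrm 0 = 0 := (hnrm0 0).2 rfl
  have hneg : nrm (-x) = nrm x := by
    have := hnrms (-1) x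
    simpa using this
  have h := hnrma x (-x)
  rw [add_neg_cancel, h0, hneg] at h
  linarith

lemma my_nrm_sum_le (nrm : E → ℝ) (h0 : nrm 0 = 0)
    (hnrma : ∀ x y : E, nrm (x + y) ≤ nrm x + nrm y)
    {ι : Type*} (s : Finset ι) (f : ι → E) :
    nrm (∑ i ∈ s, f i) ≤ ∑ i ∈ s, nrm (f i) := by
  classical
  induction s using Finset.induction with
  | empty => simp [h0]
  | insert _ _ hmem ih =>
    rw [Finset.sum_insert hmem, Finset.sum_insert hmem]
    exact (hnrma _ _).trans (by linarith)

lemma my_coord_decomp (z : E) :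
    z = ∑ i : Fin n, (z i) • EuclideanSpace.single i (1:ℝ) := by
  ext j
  rw [show (∑ i : Fin n, (z i) • EuclideanSpace.single i (1:ℝ)) j
      = ∑ i : Fin n, ((z i) • EuclideanSpace.single i (1:ℝ)) j from
    by rw [WithLp.ofLp_sum, Finset.sum_apply]]
  simp [EuclideanSpace.single_apply]

lemma my_abs_le_norm (z : E) (j : Fin n) : |z j| ≤ ‖z‖ := by
  have h := abs_real_inner_le_norm (EuclideanSpace.single j (1:ℝ)) z
  rw [EuclideanSpace.inner_single_left] at h
  simpa [EuclideanSpace.norm_single] using h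

/-- `nrm` is dominated by the Euclidean norm. -/
lemma my_nrm_le (nrm : E → ℝ)
    (hnrm0 : ∀ x : E, nrm x = 0 ↔ x = 0)
    (hnrms : ∀ (a : ℝ) (x : E), nrm (a • x) = |a| * nrm x)
    (hnrma : ∀ x y : E, nrm (x + y) ≤ nrm x + nrm y) :
    ∃ C : ℝ, 0 ≤ C ∧ ∀ z : E, nrm z ≤ C * ‖z‖ := by
  have h0 : nrm 0 = 0 := (hnrm0 0).2 rfl
  have hnn := my_nrm_nonneg nrm hnrm0 hnrms hnrma
  refine ⟨∑ i : Fin n, nrm (EuclideanSpace.single i (1:ℝ)),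
    Finset.sum_nonneg fun i _ => hnn _, fun z => ?_⟩
  calc nrm z = nrm (∑ i : Fin n, (z i) • EuclideanSpace.single i (1:ℝ)) := by
        rw [← my_coord_decomp]
    _ ≤ ∑ i : Fin n, nrm ((z i) • EuclideanSpace.single i (1:ℝ)) :=
        my_nrm_sum_le nrm h0 hnrma _ _
    _ = ∑ i : Fin n, |z i| * nrm (EuclideanSpace.single i (1:ℝ)) := by
        simp [hnrms]
    _ ≤ ∑ i : Fin n, ‖z‖ * nrm (EuclideanSpace.single i (1:ℝ)) := by
        refine Finset.sum_le_sum fun i _ =>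
          mul_le_mul_of_nonneg_right (my_abs_le_norm z i) (hnn _)
    _ = (∑ i : Fin n, nrm (EuclideanSpace.single i (1:ℝ))) * ‖z‖ := by
        rw [Finset.sum_mul]; exact Finset.sum_congr rfl fun i _ => mul_comm _ _

lemma my_nrm_continuous (nrm : E → ℝ)
    (hnrm0 : ∀ x : E, nrm x = 0 ↔ x = 0)
    (hnrms : ∀ (a : ℝ) (x : E), nrm (a • x) = |a| * nrm x)
    (hnrma : ∀ x y : E, nrm (x + y) ≤ nrm x + nrm y) :
    Continuous nrm := by
  obtain ⟨C, hC0, hC⟩ := my_nrm_le nrm hnrm0 hnrms hnrma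
  have key : ∀ a b : E, nrm a - nrm b ≤ C * ‖a - b‖ := fun a b => by
    have h1 := hnrma (a - b) b
    rw [sub_add_cancel] at h1
    have := hC (a - b)
    linarith
  have hLip : LipschitzWith (Real.toNNReal C) nrm := by
    refine LipschitzWith.of_dist_le_mul fun a b => ?_
    rw [Real.dist_eq, Real.coe_toNNReal C hC0, dist_eq_norm]
    rw [abs_sub_le_iff]
    constructor
    · exact key a b
    · have := key b a
      rwa [show b - a = -(a-b) by abel, norm_neg] at this
  exact hLip.continuous

/-- The Euclidean norm is dominated by `nrm`. -/
lemma my_norm_le_nrm (nrm : E → ℝ)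
    (hnrm0 : ∀ x : E, nrm x = 0 ↔ x = 0)
    (hnrms : ∀ (a : ℝ) (x : E), nrm (a • x) = |a| * nrm x)
    (hnrma : ∀ x y : E, nrm (x + y) ≤ nrm x + nrm y) :
    ∃ C : ℝ, 0 < C ∧ ∀ z : E, ‖z‖ ≤ C * nrm z := by
  have hnn := my_nrm_nonneg nrm hnrm0 hnrms hnrma
  by_cases hs : (Metric.sphere (0:E) 1).Nonempty
  · obtain ⟨w, hw, hwmin⟩ := (isCompact_sphere (0:E) 1).exists_isMinOn hs
      ((my_nrm_continuous nrm hnrm0 hnrms hnrma).continuousOn)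
    have hw1 : ‖w‖ = 1 := by simpa using hw
    have hwne : w ≠ 0 := by intro h; rw [h] at hw1; simp at hw1
    have hm : 0 < nrm w := lt_of_le_of_ne (hnn w) fun h => hwne ((hnrm0 w).1 h.symm)
    refine ⟨(nrm w)⁻¹, inv_pos.2 hm, fun z => ?_⟩
    by_cases hz : z = 0
    · simp [hz, (hnrm0 (0:E)).2 rfl]
    · have hzn : 0 < ‖z‖ := norm_pos_iff.2 hz
      set u : E := ‖z‖⁻¹ • z with hu
      have huS : u ∈ Metric.sphere (0:E) 1 := by
        simp [hu, norm_smul, abs_of_pos (inv_pos.2 hzn), inv_mul_cancel₀ hzn.ne']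
      have hmu : nrm w ≤ nrm u := hwmin huS
      have hzu : z = ‖z‖ • u := by rw [hu, smul_smul, mul_inv_cancel₀ hzn.ne', one_smul]
      have : nrm z = ‖z‖ * nrm u := by
        conv_lhs => rw [hzu]
        rw [hnrms, abs_of_pos hzn]
      have h2 : ‖z‖ * nrm w ≤ nrm z := by
        rw [this]
        exact mul_le_mul_of_nonneg_left hmu (le_of_lt hzn)
      rw [inv_mul_eq_div, le_div_iff₀ hm]
      linarith [h2]
  · refine ⟨1, one_pos, fun z => ?_⟩
    by_cases hz : z = 0
    · simp [hz, (hnrm0 (0:E)).2 rfl]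
    · exfalso
      exact hs ⟨‖z‖⁻¹ • z, by
        simp [norm_smul, abs_of_pos (inv_pos.2 (norm_pos_iff.2 hz)),
          inv_mul_cancel₀ (norm_pos_iff.2 hz).ne']⟩

lemma my_inner_le_dual (nrm : E → ℝ)
    (hnn : ∀ x : E, 0 ≤ nrm x)
    (hnrm0 : ∀ x : E, nrm x = 0 ↔ x = 0)
    (hnrms : ∀ (a : ℝ) (x : E), nrm (a • x) = |a| * nrm x)
    (C : ℝ) (hC0 : 0 ≤ C) (hC : ∀ z : E, ‖z‖ ≤ C * nrm z)
    (u v : E) : ⟪u, v⟫ ≤ dualNorm nrm u * nrm v := by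
  have hbdd : BddAbove {r : ℝ | ∃ z : E, nrm z ≤ 1 ∧ r = ⟪u, z⟫} := by
    refine ⟨‖u‖ * C, fun r hr => ?_⟩
    obtain ⟨z, hz1, rfl⟩ := hr
    calc (⟪u, z⟫ : ℝ) ≤ ‖u‖ * ‖z‖ := real_inner_le_norm u z
      _ ≤ ‖u‖ * (C * nrm z) := mul_le_mul_of_nonneg_left (hC z) (norm_nonneg u)
      _ ≤ ‖u‖ * (C * 1) :=
          mul_le_mul_of_nonneg_left (mul_le_mul_of_nonneg_left hz1 hC0) (norm_nonneg u)
      _ = ‖u‖ * C := by ring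
  by_cases hv : v = 0
  · simp [hv, (hnrm0 (0:E)).2 rfl]
  · have hnv : 0 < nrm v := lt_of_le_of_ne (hnn v) fun h => hv ((hnrm0 v).1 h.symm)
    set z : E := (nrm v)⁻¹ • v with hz
    have hz1 : nrm z ≤ 1 := by
      rw [hz, hnrms, abs_of_pos (inv_pos.2 hnv), inv_mul_cancel₀ hnv.ne']
    have hmem : (⟪u, z⟫ : ℝ) ∈ {r : ℝ | ∃ z : E, nrm z ≤ 1 ∧ r = ⟪u, z⟫} := ⟨z, hz1, rfl⟩
    have hle : (⟪u, z⟫ : ℝ) ≤ dualNorm nrm u := le_csSup hbdd hmem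
    have hiz : (⟪u, z⟫ : ℝ) = (nrm v)⁻¹ * ⟪u, v⟫ := by
      rw [hz, real_inner_smul_right]
    rw [hiz] at hle
    calc (⟪u, v⟫ : ℝ) = nrm v * ((nrm v)⁻¹ * ⟪u, v⟫) := by
          field_simp
      _ ≤ nrm v * dualNorm nrm u := mul_le_mul_of_nonneg_left hle (le_of_lt hnv)
      _ = dualNorm nrm u * nrm v := mul_comm _ _

lemma my_three_point (ψ : E → ℝ) (gψ : E → E) (z w x : E) :
    (⟪gψ x - gψ w, z - w⟫ : ℝ) = Bpsi ψ gψ z w + Bpsi ψ gψ w x - Bpsi ψ gψ z x := by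
  simp only [Bpsi, inner_sub_left, inner_sub_right]
  ring

/-- First-order optimality for the Bregman prox step. -/
lemma my_opt (X : Set E) (hXcv : Convex ℝ X)
    (nrm : E → ℝ)
    (hnrms : ∀ (a : ℝ) (x : E), nrm (a • x) = |a| * nrm x)
    (ψ : E → ℝ) (gψ : E → E) (α : ℝ)
    (hgradc : ContinuousOn gψ X)
    (hsc : ∀ x ∈ X, ∀ z ∈ X, ψ x + ⟪gψ x, z - x⟫ + α / 2 * nrm (z - x) ^ 2 ≤ ψ z)
    (g w : E) (hw : IsArgminOver (fun z => ⟪g, z⟫ + ψ z) X w)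
    (z : E) (hz : z ∈ X) : 0 ≤ ⟪g + gψ w, z - w⟫ := by
  obtain ⟨hwX, hmin⟩ := hw
  set v : E := z - w with hv
  have hmem : ∀ s : ℝ, s ∈ Set.Ioc (0:ℝ) 1 → w + s • v ∈ X := by
    intro s hs
    have h := hXcv hwX hz (by linarith [hs.2] : (0:ℝ) ≤ 1 - s) (le_of_lt hs.1) (by ring)
    convert h using 1
    rw [hv]
    module
  have key : ∀ s : ℝ, s ∈ Set.Ioc (0:ℝ) 1 →
      0 ≤ ⟪g + gψ (w + s • v), v⟫ - α / 2 * s * nrm v ^ 2 := by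
    intro s hs
    have hsX := hmem s hs
    have h1 := hmin (w + s • v) hsX
    simp only at h1
    have h2 := hsc (w + s • v) hsX w hwX
    have e1 : w - (w + s • v) = (-s) • v := by module
    have e2 : nrm ((-s) • v) = s * nrm v := by
      rw [hnrms, abs_neg, abs_of_pos hs.1]
    have e4 : (⟪g, w + s • v⟫ : ℝ) = ⟪g, w⟫ + s * ⟪g, v⟫ := by
      rw [inner_add_right, real_inner_smul_right]
    rw [e1, e2] at h2
    rw [e4] at h1
    have e3' : (⟪gψ (w + s • v), (-s) • v⟫ : ℝ) = -s * ⟪gψ (w + s • v), v⟫ := by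
      rw [real_inner_smul_right]
    rw [e3'] at h2
    have hkey : 0 ≤ s * (⟪g + gψ (w + s • v), v⟫ - α / 2 * s * nrm v ^ 2) := by
      have expand : (⟪g + gψ (w + s • v), v⟫ : ℝ) = ⟪g, v⟫ + ⟪gψ (w + s • v), v⟫ := by
        rw [inner_add_left]
      rw [expand]
      nlinarith [h1, h2]
    exact nonneg_of_mul_nonneg_right hkey hs.1
  have hIoc : Set.Ioc (0:ℝ) 1 ∈ 𝓝[>] (0:ℝ) :=
    Ioc_mem_nhdsGT_of_mem (by constructor <;> norm_num)
  have hev : ∀ᶠ s in 𝓝[>] (0:ℝ), 0 ≤ ⟪g + gψ (w + s • v), v⟫ - α / 2 * s * nrm v ^ 2 := by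
    filter_upwards [hIoc] with s hs using key s hs
  have htd1 : Tendsto (fun s : ℝ => w + s • v) (𝓝[>] (0:ℝ)) (𝓝[X] w) := by
    rw [tendsto_nhdsWithin_iff]
    constructor
    · have hcont : Continuous fun s : ℝ => w + s • v := by continuity
      have := hcont.tendsto 0
      simp only [zero_smul, add_zero] at this
      exact this.mono_left nhdsWithin_le_nhds
    · filter_upwards [hIoc] with s hs using hmem s hs
  have htd2 : Tendsto (fun s : ℝ => gψ (w + s • v)) (𝓝[>] (0:ℝ)) (𝓝 (gψ w)) :=
    (hgradc w hwX).tendsto.comp htd1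
  have htd3 : Tendsto (fun s : ℝ => ⟪g + gψ (w + s • v), v⟫ - α / 2 * s * nrm v ^ 2)
      (𝓝[>] (0:ℝ)) (𝓝 (⟪g + gψ w, v⟫ - α / 2 * 0 * nrm v ^ 2)) := by
    apply Tendsto.sub
    · have hc : Continuous (fun e : EuclideanSpace ℝ (Fin n) => (⟪g + e, v⟫ : ℝ)) :=
        (continuous_const.add continuous_id).inner continuous_const
      exact (hc.tendsto (gψ w)).comp htd2
    · have hcont : Continuous (fun s : ℝ => α / 2 * s * nrm v ^ 2) :=
        (continuous_const.mul continuous_id).mul continuous_const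
      exact ((hcont.tendsto 0).mono_left nhdsWithin_le_nhds)
  have := ge_of_tendsto htd3 hev
  simpa using this

lemma my_telescope (f : ℕ → ℝ) (m T : ℕ) (hm : m ≤ T) :
    ∑ t ∈ Finset.Icc m T, (f t - f (t+1)) = f m - f (T+1) := by
  rw [← Finset.Ico_add_one_right_eq_Icc, Finset.sum_Ico_eq_sum_range]
  have h1 : T + 1 - m = (T - m) + 1 := by omega
  rw [h1]
  calc ∑ i ∈ Finset.range (T - m + 1), (f (m + i) - f (m + i + 1))
      = (fun j => f (m + j)) 0 - (fun j => f (m + j)) (T - m + 1) :=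
        Finset.sum_range_sub' (fun j => f (m + j)) (T - m + 1)
    _ = f m - f (T+1) := by
        simp only []
        rw [Nat.add_zero, show m + (T - m + 1) = T + 1 by omega]

lemma my_log_sum (T : ℕ) (hT : 1 ≤ T) :
    ∑ t ∈ Finset.Icc (T/2) T, (1:ℝ)/((t:ℝ)+1) ≤ Real.log 6 := by
  have hlog6 : (3:ℝ)/2 ≤ Real.log 6 := by
    have h1 : Real.exp 1 < 2.7182818286 := Real.exp_one_lt_d9
    have h4 : Real.exp 3 = (Real.exp 1)^3 := by
      rw [show (3:ℝ) = 1 + 1 + 1 by norm_num, Real.exp_add, Real.exp_add]; ring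
    have h5 : Real.exp 3 < 36 := by
      rw [h4]
      calc (Real.exp 1)^3 < 2.7182818286^3 :=
            pow_lt_pow_left₀ h1 (Real.exp_pos 1).le (by norm_num)
        _ < 36 := by norm_num
    have h3 : Real.exp (3/2) * Real.exp (3/2) = Real.exp 3 := by
      rw [← Real.exp_add]; norm_num
    have h6 : Real.exp (3/2) ≤ 6 := by nlinarith [Real.exp_pos (3/2 : ℝ)]
    calc (3:ℝ)/2 = Real.log (Real.exp (3/2)) := (Real.log_exp _).symm
      _ ≤ Real.log 6 := Real.log_le_log (Real.exp_pos _) h6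
  rcases eq_or_lt_of_le hT with h1 | h2
  · -- T = 1
    have hT1 : T = 1 := h1.symm
    subst hT1
    have : Finset.Icc (1/2 : ℕ) 1 = {0, 1} := by decide
    rw [this]
    rw [Finset.sum_insert (by decide), Finset.sum_singleton]
    norm_num
    linarith
  · -- T ≥ 2
    have hT2 : 2 ≤ T := h2
    set m := T / 2 with hm
    have hm1 : 1 ≤ m := by omega
    have hmT : m ≤ T := Nat.div_le_self T 2
    have hterm : ∀ t ∈ Finset.Icc m T,
        (1:ℝ)/((t:ℝ)+1) ≤ Real.log ((t:ℝ)+1) - Real.log (t:ℝ) := by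
      intro t ht
      have ht1 : 1 ≤ t := le_trans hm1 (Finset.mem_Icc.1 ht).1
      have htpos : (0:ℝ) < (t:ℝ) := by exact_mod_cast ht1
      have htpos1 : (0:ℝ) < (t:ℝ) + 1 := by linarith
      have h := Real.log_le_sub_one_of_pos
        (show (0:ℝ) < (t:ℝ)/((t:ℝ)+1) by positivity)
      rw [Real.log_div htpos.ne' htpos1.ne'] at h
      have he : (t:ℝ)/((t:ℝ)+1) - 1 = -(1/((t:ℝ)+1)) := by field_simp; ring
      rw [he] at h
      linarith
    have hsum' := Finset.sum_le_sum hterm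
    have htel : ∑ t ∈ Finset.Icc m T, (Real.log ((t:ℝ)+1) - Real.log (t:ℝ))
        = Real.log ((T:ℝ)+1) - Real.log (m:ℝ) := by
      have := my_telescope (fun t => - Real.log (t:ℝ)) m T hmT
      have e : ∀ t ∈ Finset.Icc m T,
          Real.log ((t:ℝ)+1) - Real.log (t:ℝ)
            = (fun t : ℕ => - Real.log (t:ℝ)) t - (fun t : ℕ => - Real.log (t:ℝ)) (t+1) := by
        intro t _
        push_cast
        ring
      rw [Finset.sum_congr rfl e, this]
      push_cast
      ring
    have hmpos : (0:ℝ) < (m:ℝ) := by exact_mod_cast hm1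
    have h6m : (T:ℝ) + 1 ≤ 6 * (m:ℝ) := by
      have : T + 1 ≤ 6 * m := by omega
      exact_mod_cast this
    have hlog : Real.log ((T:ℝ)+1) ≤ Real.log 6 + Real.log (m:ℝ) := by
      have h := Real.log_le_log (by positivity : (0:ℝ) < (T:ℝ)+1) h6m
      rwa [Real.log_mul (by norm_num) hmpos.ne'] at h
    calc ∑ t ∈ Finset.Icc m T, (1:ℝ)/((t:ℝ)+1)
        ≤ ∑ t ∈ Finset.Icc m T, (Real.log ((t:ℝ)+1) - Real.log (t:ℝ)) := hsum'
      _ = Real.log ((T:ℝ)+1) - Real.log (m:ℝ) := htel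
      _ ≤ Real.log 6 := by linarith

end auxLemmas
set_option maxHeartbeats 1000000 in
/-- deterministic Popov mirror-prox, dual-gap bounds with constant and diminishing step sizes. -/
theorem stmt_12 {n : ℕ}
    (X : Set (EuclideanSpace ℝ (Fin n)))
    (hXne : X.Nonempty) (hXcl : IsClosed X) (hXcv : Convex ℝ X)
    (nrm : EuclideanSpace ℝ (Fin n) → ℝ)
    (hnrm0 : ∀ x, nrm x = 0 ↔ x = 0)
    (hnrms : ∀ (a : ℝ) (x : EuclideanSpace ℝ (Fin n)), nrm (a • x) = |a| * nrm x)
    (hnrma : ∀ x y, nrm (x + y) ≤ nrm x + nrm y)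
    (ψ : EuclideanSpace ℝ (Fin n) → ℝ)
    (gψ : EuclideanSpace ℝ (Fin n) → EuclideanSpace ℝ (Fin n))
    (α : ℝ) (hα : 0 < α)
    (hgrad : ∀ x ∈ X, HasGradientAt ψ (gψ x) x)
    (hgradc : ContinuousOn gψ X)
    (hsc : ∀ x ∈ X, ∀ z ∈ X, ψ x + ⟪gψ x, z - x⟫ + α / 2 * nrm (z - x) ^ 2 ≤ ψ z)
    (F : EuclideanSpace ℝ (Fin n) → EuclideanSpace ℝ (Fin n))
    (ν L M : ℝ) (hν : 0 ≤ ν) (hL : 0 < L) (hM : 0 ≤ M)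
    (hF : ∀ x ∈ X, ∀ y ∈ X, dualNorm nrm (F x - F y) ≤ L * nrm (x - y) ^ ν + M)
    (hmono : ∀ x ∈ X, ∀ y ∈ X, 0 ≤ ⟪F x - F y, x - y⟫)
    (hXbd : Bornology.IsBounded X)
    (D : ℝ) (hD : 0 < D) (hDle : ∀ x ∈ X, ∀ z ∈ X, Bpsi ψ gψ z x ≤ D)
    -- the deterministic Popov mirror-prox iterates
    (γ : ℕ → ℝ) (hγpos : ∀ t, 0 < γ t)
    (x y : ℕ → EuclideanSpace ℝ (Fin n))
    (hx0X : x 0 ∈ X) (hy0 : y 0 = x 0)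
    (hyit : ∀ t : ℕ,
      IsArgminOver (fun z => ⟪γ t • F (y t) - gψ (x t), z⟫ + ψ z) X (y (t + 1)))
    (hxit : ∀ t : ℕ,
      IsArgminOver (fun z => ⟪γ t • F (y (t + 1)) - gψ (x t), z⟫ + ψ z) X (x (t + 1)))
    (Dbar : ℝ)
    (hDbar : Dbar = if 0 < ν then
        3 * 2 ^ ν * L ^ 2 * D ^ ν / α ^ (1 + ν) + 6 * M ^ 2 / α
      else (L + M) ^ 2 / (2 * α))
    (T : ℕ) (c : ℝ) (hc : 0 < c) :
    ((∀ t : ℕ, γ t = c / Real.sqrt ((T : ℝ) + 1)) →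
      gapFun X F ((((T : ℝ) + 1)⁻¹) • ∑ t ∈ Finset.range (T + 1), y (t + 1)) ≤
        (D + c ^ 2 * Dbar) / (c * Real.sqrt ((T : ℝ) + 1))) ∧
    (1 ≤ T → (∀ t : ℕ, γ t = c / Real.sqrt ((t : ℝ) + 1)) →
      gapFun X F
          ((∑ t ∈ Finset.Icc (T / 2) T, γ t)⁻¹ •
            ∑ t ∈ Finset.Icc (T / 2) T, γ t • y (t + 1)) ≤
        (2 * D + 2 * Real.log 6 * c ^ 2 * Dbar) / (c * Real.sqrt ((T : ℝ) + 1))) := by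
  classical
  have hnn : ∀ v, 0 ≤ nrm v := my_nrm_nonneg nrm hnrm0 hnrms hnrma
  obtain ⟨C, hCpos, hC⟩ := my_norm_le_nrm nrm hnrm0 hnrms hnrma
  have hdual : ∀ u v, (⟪u, v⟫:ℝ) ≤ dualNorm nrm u * nrm v :=
    my_inner_le_dual nrm hnn hnrm0 hnrms C hCpos.le hC
  have hXmem : ∀ t, x t ∈ X ∧ y t ∈ X := by
    intro t
    induction t with
    | zero => exact ⟨hx0X, hy0 ▸ hx0X⟩
    | succ t ih => exact ⟨(hxit t).1, (hyit t).1⟩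
  have hBsc : ∀ a ∈ X, ∀ b ∈ X, α/2 * nrm (b - a)^2 ≤ Bpsi ψ gψ b a := by
    intro a ha b hb
    have := hsc a ha b hb
    simp only [Bpsi]
    linarith
  have hB0 : ∀ a ∈ X, ∀ b ∈ X, 0 ≤ Bpsi ψ gψ b a := by
    intro a ha b hb
    have h := hBsc a ha b hb
    nlinarith [sq_nonneg (nrm (b - a)), hα.le]
  have hDbar0 : 0 ≤ Dbar := by
    rw [hDbar]
    split
    · positivity
    · positivity
  -- per-step cross term bound
  have hcross : ∀ t, γ t * ⟪F (y (t+1)) - F (y t), y (t+1) - x (t+1)⟫ ≤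
      (γ t)^2 * Dbar + α/2 * nrm (x (t+1) - y (t+1))^2 := by
    intro t
    set R : ℝ := L * nrm (y (t+1) - y t) ^ ν + M with hR
    have hp0 : 0 ≤ nrm (y (t+1) - y t) := hnn _
    have hR0 : 0 ≤ R := add_nonneg (mul_nonneg hL.le (Real.rpow_nonneg hp0 ν)) hM
    have hsym : nrm (y (t+1) - x (t+1)) = nrm (x (t+1) - y (t+1)) := by
      rw [show y (t+1) - x (t+1) = (-1:ℝ) • (x (t+1) - y (t+1)) by module, hnrms]
      simp
    have h1 : (⟪F (y (t+1)) - F (y t), y (t+1) - x (t+1)⟫:ℝ) ≤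
        R * nrm (x (t+1) - y (t+1)) := by
      rw [← hsym]
      exact (hdual _ _).trans (mul_le_mul_of_nonneg_right
        (hF (y (t+1)) (hXmem (t+1)).2 (y t) (hXmem t).2) (hnn _))
    have hd0 : 0 ≤ nrm (x (t+1) - y (t+1)) := hnn _
    have hRD : R^2 / (2*α) ≤ Dbar := by
      by_cases hν0 : ν = 0
      · rw [hDbar, hR, hν0, if_neg (lt_irrefl 0), Real.rpow_zero, mul_one]
      · have hνpos : 0 < ν := lt_of_le_of_ne hν (Ne.symm hν0)
        have hΔ2 : nrm (y (t+1) - y t)^2 ≤ 2*D/α := by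
          have h2 := hBsc (y t) (hXmem t).2 (y (t+1)) (hXmem (t+1)).2
          have h3 := hDle (y t) (hXmem t).2 (y (t+1)) (hXmem (t+1)).2
          rw [le_div_iff₀ hα]
          nlinarith
        have e : (nrm (y (t+1) - y t) ^ ν)^2 = (nrm (y (t+1) - y t)^2) ^ ν := by
          rw [← Real.rpow_natCast (nrm (y (t+1) - y t) ^ ν) 2,
              ← Real.rpow_natCast (nrm (y (t+1) - y t)) 2,
              ← Real.rpow_mul hp0, ← Real.rpow_mul hp0, mul_comm]
        have hX2 : (nrm (y (t+1) - y t) ^ ν)^2 ≤ (2*D/α) ^ ν := by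
          rw [e]
          exact Real.rpow_le_rpow (sq_nonneg _) hΔ2 hν
        have hq : ((2*D/α : ℝ)) ^ ν = 2^ν * D^ν / α^ν := by
          rw [Real.div_rpow (by positivity) hα.le, Real.mul_rpow (by norm_num) hD.le]
        have hR2 : R^2 ≤ 2*L^2*(2^ν * D^ν / α^ν) + 2*M^2 := by
          rw [hR, ← hq]
          nlinarith [sq_nonneg (L * nrm (y (t+1) - y t) ^ ν - M),
            mul_le_mul_of_nonneg_left hX2 (sq_nonneg L)]
        have hαν : (0:ℝ) < α ^ ν := Real.rpow_pos_of_pos hα ν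
        have e2 : 2*α*Dbar = 6*2^ν*L^2*D^ν/α^ν + 12*M^2 := by
          rw [hDbar, if_pos hνpos, Real.rpow_add hα, Real.rpow_one]
          field_simp
          ring
        have hpos1 : (0:ℝ) < 2^ν * D^ν / α^ν := by positivity
        have e2' : 2*α*Dbar = 6*(L^2*(2^ν * D^ν / α^ν)) + 12*M^2 := by rw [e2]; ring
        rw [div_le_iff₀ (by positivity : (0:ℝ) < 2*α)]
        nlinarith [hR2, e2', mul_nonneg (sq_nonneg L) hpos1.le, sq_nonneg M]
    have young : γ t * (R * nrm (x (t+1) - y (t+1))) ≤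
        (γ t)^2 * (R^2/(2*α)) + α/2 * nrm (x (t+1) - y (t+1))^2 := by
      set a : ℝ := γ t * R with ha
      set d : ℝ := nrm (x (t+1) - y (t+1)) with hd
      have e : (γ t)^2 * (R^2/(2*α)) = a^2/(2*α) := by rw [ha]; ring
      rw [e, show γ t * (R * d) = a * d by rw [ha]; ring]
      rw [← sub_nonneg]
      have e3 : a^2/(2*α) + α/2*d^2 - a*d = (a - α*d)^2/(2*α) := by
        field_simp
        ring
      rw [e3]
      positivity
    calc γ t * ⟪F (y (t+1)) - F (y t), y (t+1) - x (t+1)⟫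
        ≤ γ t * (R * nrm (x (t+1) - y (t+1))) :=
          mul_le_mul_of_nonneg_left h1 (hγpos t).le
      _ ≤ (γ t)^2 * (R^2/(2*α)) + α/2 * nrm (x (t+1) - y (t+1))^2 := young
      _ ≤ (γ t)^2 * Dbar + α/2 * nrm (x (t+1) - y (t+1))^2 := by
          have := mul_le_mul_of_nonneg_left hRD (sq_nonneg (γ t))
          linarith
  -- per-step inequality
  have hstep : ∀ t, ∀ z ∈ X, γ t * ⟪F z, y (t+1) - z⟫ ≤
      Bpsi ψ gψ z (x t) - Bpsi ψ gψ z (x (t+1)) + (γ t)^2 * Dbar := by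
    intro t z hz
    have hx'X : x (t+1) ∈ X := (hXmem (t+1)).1
    have hy'X : y (t+1) ∈ X := (hXmem (t+1)).2
    have hxtX : x t ∈ X := (hXmem t).1
    have hopt1 := my_opt X hXcv nrm hnrms ψ gψ α hgradc hsc
      (γ t • F (y (t+1)) - gψ (x t)) (x (t+1)) (hxit t) z hz
    have hopt2 := my_opt X hXcv nrm hnrms ψ gψ α hgradc hsc
      (γ t • F (y t) - gψ (x t)) (y (t+1)) (hyit t) (x (t+1)) hx'X
    have tp1 := my_three_point ψ gψ z (x (t+1)) (x t)
    have tp2 := my_three_point ψ gψ (x (t+1)) (y (t+1)) (x t)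
    have hmono' : 0 ≤ γ t * ⟪F (y (t+1)) - F z, y (t+1) - z⟫ :=
      mul_nonneg (hγpos t).le (hmono (y (t+1)) hy'X z hz)
    have hcr := hcross t
    have hBxy := hBsc (y (t+1)) hy'X (x (t+1)) hx'X
    have hByx := hB0 (x t) hxtX (y (t+1)) hy'X
    simp only [inner_add_left, inner_sub_left, inner_sub_right, real_inner_smul_left,
      mul_sub, mul_add] at hopt1 hopt2 tp1 tp2 hmono' hcr ⊢
    linarith
  -- summed inequality
  have hsum : ∀ m, m ≤ T → ∀ z ∈ X,
      ∑ t ∈ Finset.Icc m T, γ t * ⟪F z, y (t+1) - z⟫ ≤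
        D + Dbar * ∑ t ∈ Finset.Icc m T, (γ t)^2 := by
    intro m hm z hz
    have h1 : ∑ t ∈ Finset.Icc m T, γ t * ⟪F z, y (t+1) - z⟫ ≤
        ∑ t ∈ Finset.Icc m T,
          (Bpsi ψ gψ z (x t) - Bpsi ψ gψ z (x (t+1)) + (γ t)^2 * Dbar) :=
      Finset.sum_le_sum fun t _ => hstep t z hz
    rw [Finset.sum_add_distrib,
      my_telescope (fun t => Bpsi ψ gψ z (x t)) m T hm] at h1
    have h2 : Bpsi ψ gψ z (x m) ≤ D := hDle (x m) (hXmem m).1 z hz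
    have h3 : 0 ≤ Bpsi ψ gψ z (x (T+1)) := hB0 (x (T+1)) (hXmem (T+1)).1 z hz
    have h4 : ∑ t ∈ Finset.Icc m T, (γ t)^2 * Dbar
        = Dbar * ∑ t ∈ Finset.Icc m T, (γ t)^2 := by
      rw [Finset.mul_sum]; exact Finset.sum_congr rfl fun t _ => mul_comm _ _
    rw [h4] at h1
    linarith
  have hT1 : (0:ℝ) < (T:ℝ) + 1 := by positivity
  have hspos : 0 < Real.sqrt ((T:ℝ)+1) := Real.sqrt_pos.2 hT1
  have hs2 : Real.sqrt ((T:ℝ)+1)^2 = (T:ℝ)+1 := Real.sq_sqrt hT1.le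
  constructor
  · -- constant step size
    intro hγc
    set s : ℝ := Real.sqrt ((T:ℝ)+1)
    have hsgsq : ∑ t ∈ Finset.Icc 0 T, (γ t)^2 = c^2 := by
      have he : ∀ t ∈ Finset.Icc 0 T, (γ t)^2 = c^2/((T:ℝ)+1) := by
        intro t _
        rw [hγc t, div_pow, hs2]
      rw [Finset.sum_congr rfl he, Finset.sum_const, Nat.card_Icc]
      simp only [Nat.sub_zero, nsmul_eq_mul]
      push_cast
      field_simp
    have hIcc : Finset.range (T+1) = Finset.Icc 0 T := by
      rw [Finset.range_eq_Ico, Finset.Ico_add_one_right_eq_Icc]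
    show sSup _ ≤ _
    apply csSup_le
    · obtain ⟨z₀, hz₀⟩ := hXne
      exact ⟨_, z₀, hz₀, rfl⟩
    · rintro r ⟨z, hz, rfl⟩
      have expand : (⟪F z, (((T:ℝ)+1)⁻¹) • (∑ t ∈ Finset.range (T+1), y (t+1)) - z⟫:ℝ)
          = (((T:ℝ)+1)⁻¹) * ∑ t ∈ Finset.range (T+1), (⟪F z, y (t+1) - z⟫:ℝ) := by
        rw [inner_sub_right, real_inner_smul_right, inner_sum]
        have e2 : ∑ t ∈ Finset.range (T+1), (⟪F z, y (t+1) - z⟫:ℝ)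
            = (∑ t ∈ Finset.range (T+1), (⟪F z, y (t+1)⟫:ℝ)) - ((T:ℝ)+1) * ⟪F z, z⟫ := by
          simp only [inner_sub_right, Finset.sum_sub_distrib, Finset.sum_const,
            Finset.card_range, nsmul_eq_mul]
          push_cast
          ring
        rw [e2]
        field_simp
      rw [expand, hIcc]
      have hkey := hsum 0 (Nat.zero_le T) z hz
      rw [hsgsq] at hkey
      have hγconst : ∑ t ∈ Finset.Icc 0 T, γ t * ⟪F z, y (t+1) - z⟫
          = (c/s) * ∑ t ∈ Finset.Icc 0 T, (⟪F z, y (t+1) - z⟫:ℝ) := by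
        rw [Finset.mul_sum]
        exact Finset.sum_congr rfl fun t _ => by rw [hγc t]
      rw [hγconst] at hkey
      have hcs : (0:ℝ) < c/s := by positivity
      have hQ : ∑ t ∈ Finset.Icc 0 T, (⟪F z, y (t+1) - z⟫:ℝ) ≤ (D + Dbar * c^2)/(c/s) := by
        rw [← le_div_iff₀' hcs] at hkey
        exact hkey
      calc (((T:ℝ)+1)⁻¹) * ∑ t ∈ Finset.Icc 0 T, (⟪F z, y (t+1) - z⟫:ℝ)
          ≤ (((T:ℝ)+1)⁻¹) * ((D + Dbar * c^2)/(c/s)) :=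
            mul_le_mul_of_nonneg_left hQ (by positivity)
        _ = (D + c ^ 2 * Dbar) / (c * s) := by
            rw [← hs2]
            field_simp
  · -- diminishing step size
    intro hT hγd
    set s : ℝ := Real.sqrt ((T:ℝ)+1)
    set m : ℕ := T / 2 with hm
    have hmT : m ≤ T := Nat.div_le_self T 2
    set S : ℝ := ∑ t ∈ Finset.Icc m T, γ t with hS
    have hle : ∀ t ∈ Finset.Icc m T, c / s ≤ γ t := by
      intro t ht
      rw [hγd t]
      have h1 : Real.sqrt ((t:ℝ)+1) ≤ s := by
        apply Real.sqrt_le_sqrt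
        have h := (Finset.mem_Icc.1 ht).2
        have : (t:ℝ) ≤ (T:ℝ) := Nat.cast_le.2 h
        linarith
      have h2 : (0:ℝ) < Real.sqrt ((t:ℝ)+1) := Real.sqrt_pos.2 (by positivity)
      exact div_le_div_of_nonneg_left hc.le h2 h1
    have hcard : ((T + 1 - m : ℕ) : ℝ) * (c/s) ≤ S := by
      have h2 := Finset.card_nsmul_le_sum (Finset.Icc m T) γ (c/s) hle
      rwa [Nat.card_Icc, nsmul_eq_mul] at h2
    have hhalf : ((T:ℝ)+1)/2 ≤ ((T + 1 - m : ℕ) : ℝ) := by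
      have hnat : T + 1 ≤ 2 * (T + 1 - m) := by omega
      have hcast : ((T:ℝ)+1) ≤ 2 * ((T + 1 - m : ℕ):ℝ) := by exact_mod_cast hnat
      linarith
    have hSlb : c * s / 2 ≤ S := by
      have h3 : ((T:ℝ)+1)/2 * (c/s) ≤ ((T + 1 - m : ℕ):ℝ) * (c/s) :=
        mul_le_mul_of_nonneg_right hhalf (by positivity)
      have e : ((T:ℝ)+1)/2 * (c/s) = c * s / 2 := by
        rw [← hs2]; field_simp
      linarith
    have hSpos : 0 < S := lt_of_lt_of_le (by positivity) hSlb
    have hsgsq : ∑ t ∈ Finset.Icc m T, (γ t)^2 ≤ c^2 * Real.log 6 := by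
      have he : ∀ t ∈ Finset.Icc m T, (γ t)^2 = c^2 * (1/((t:ℝ)+1)) := by
        intro t _
        rw [hγd t, div_pow, Real.sq_sqrt (by positivity : (0:ℝ) ≤ (t:ℝ)+1)]
        ring
      rw [Finset.sum_congr rfl he, ← Finset.mul_sum]
      exact mul_le_mul_of_nonneg_left (my_log_sum T hT) (sq_nonneg c)
    have hlog60 : (0:ℝ) ≤ Real.log 6 := Real.log_nonneg (by norm_num)
    show sSup _ ≤ _
    apply csSup_le
    · obtain ⟨z₀, hz₀⟩ := hXne
      exact ⟨_, z₀, hz₀, rfl⟩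
    · rintro r ⟨z, hz, rfl⟩
      have expand : (⟪F z, S⁻¹ • (∑ t ∈ Finset.Icc m T, γ t • y (t+1)) - z⟫:ℝ)
          = S⁻¹ * ∑ t ∈ Finset.Icc m T, γ t * (⟪F z, y (t+1) - z⟫:ℝ) := by
        rw [inner_sub_right, real_inner_smul_right, inner_sum]
        have e1 : ∀ t ∈ Finset.Icc m T, (⟪F z, γ t • y (t+1)⟫:ℝ) = γ t * ⟪F z, y (t+1)⟫ :=
          fun t _ => real_inner_smul_right _ _ _
        rw [Finset.sum_congr rfl e1]
        have e2 : ∑ t ∈ Finset.Icc m T, γ t * (⟪F z, y (t+1) - z⟫:ℝ)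
            = (∑ t ∈ Finset.Icc m T, γ t * (⟪F z, y (t+1)⟫:ℝ)) - S * ⟪F z, z⟫ := by
          rw [hS, Finset.sum_mul, ← Finset.sum_sub_distrib]
          refine Finset.sum_congr rfl fun t _ => ?_
          rw [inner_sub_right]
          ring
        rw [e2]
        field_simp
      rw [expand]
      have hkey := hsum m hmT z hz
      have hQ : ∑ t ∈ Finset.Icc m T, γ t * (⟪F z, y (t+1) - z⟫:ℝ)
          ≤ D + Dbar * (c^2 * Real.log 6) :=
        hkey.trans (by nlinarith [hsgsq, hDbar0])
      have hQ0 : (0:ℝ) ≤ D + Dbar * (c^2 * Real.log 6) := by positivity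
      have hSinv : S⁻¹ ≤ 2/(c*s) := by
        have h4 := one_div_le_one_div_of_le (by positivity : (0:ℝ) < c*s/2) hSlb
        calc S⁻¹ = 1/S := (one_div S).symm
          _ ≤ 1/(c*s/2) := h4
          _ = 2/(c*s) := by
              rw [one_div_div]
      calc S⁻¹ * ∑ t ∈ Finset.Icc m T, γ t * (⟪F z, y (t+1) - z⟫:ℝ)
          ≤ S⁻¹ * (D + Dbar * (c^2 * Real.log 6)) :=
            mul_le_mul_of_nonneg_left hQ (inv_nonneg.2 hSpos.le)
        _ ≤ (2/(c*s)) * (D + Dbar * (c^2 * Real.log 6)) :=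
            mul_le_mul_of_nonneg_right hSinv hQ0
        _ = (2 * D + 2 * Real.log 6 * c ^ 2 * Dbar) / (c * s) := by
            field_simp
end

section
/- Assume M_ν = 0 and ν ∈ (0,1). Let Ĉ = (1−ν)[(2^{1+2ν} L_ν² ν^ν / α^{1+ν})^{1/(1−ν)} + (2^{1+ν} L_ν² ν^ν / α^{1+ν})^{1/(1−ν)}]. If the deterministic Popov mirror-prox is run for a known number T ≥ 0 of iterations with the constant step size γ_t = c/(T+1)^a, where c > 0 and 0 < a < 1, then G((1/(T+1)) Σ_{t=0}^{T} y_{t+1}) ≤ D/(c(T+1)^{1−a}) + Ĉ c^{(1+ν)/(1−ν)}/(T+1)^{a(1+ν)/(1−ν)}. -/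
open scoped RealInnerProductSpace
open MeasureTheory

section Aux

variable {n : ℕ}

lemma aux_decomp (v : EuclideanSpace ℝ (Fin n)) : v = ∑ i, v i • EuclideanSpace.single i (1:ℝ) := by
  ext j
  have : (∑ i, v i • EuclideanSpace.single i (1:ℝ)) j = ∑ i, (v i • EuclideanSpace.single i (1:ℝ)) j :=
    by rw [WithLp.ofLp_sum]; exact Finset.sum_apply j Finset.univ _
  rw [this]
  simp [EuclideanSpace.single_apply]

lemma aux_coord_le (v : EuclideanSpace ℝ (Fin n)) (i : Fin n) : |v i| ≤ ‖v‖ := by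
  have h := abs_real_inner_le_norm v (EuclideanSpace.single i (1:ℝ))
  rw [EuclideanSpace.inner_single_right, EuclideanSpace.norm_single] at h
  simpa using h

section NrmBasic
variable (nrm : EuclideanSpace ℝ (Fin n) → ℝ)
  (hnrm0 : ∀ x, nrm x = 0 ↔ x = 0)
  (hnrms : ∀ (a : ℝ) (x : EuclideanSpace ℝ (Fin n)), nrm (a • x) = |a| * nrm x)
  (hnrma : ∀ x y, nrm (x + y) ≤ nrm x + nrm y)

include hnrms in
lemma aux_nrm_zero : nrm 0 = 0 := by simpa using hnrms 0 0

include hnrms hnrma in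
lemma aux_nrm_nonneg (x : EuclideanSpace ℝ (Fin n)) : 0 ≤ nrm x := by
  have h0 : nrm 0 = 0 := aux_nrm_zero nrm hnrms
  have h1 := hnrma x (-x)
  have h2 : nrm (-x) = nrm x := by simpa using hnrms (-1) x
  simp [h2] at h1
  rw [h0] at h1
  linarith

include hnrms in
lemma aux_nrm_neg (x : EuclideanSpace ℝ (Fin n)) : nrm (-x) = nrm x := by
  simpa using hnrms (-1) x

include hnrms hnrma in
lemma aux_nrm_sum {ι : Type*} (s : Finset ι) (f : ι → EuclideanSpace ℝ (Fin n)) :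
    nrm (∑ i ∈ s, f i) ≤ ∑ i ∈ s, nrm (f i) := by
  classical
  induction s using Finset.induction_on with
  | empty => simp [aux_nrm_zero nrm hnrms]
  | insert _ _ hnotmem ih =>
    rename_i a s
    rw [Finset.sum_insert hnotmem, Finset.sum_insert hnotmem]
    exact le_trans (hnrma _ _) (by linarith)

include hnrms hnrma in
lemma aux_nrm_upper : ∃ C : ℝ, 0 ≤ C ∧ ∀ v, nrm v ≤ C * ‖v‖ := by
  refine ⟨∑ i, nrm (EuclideanSpace.single i (1:ℝ)),
    Finset.sum_nonneg fun i _ => aux_nrm_nonneg nrm hnrms hnrma _, fun v => ?_⟩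
  calc nrm v = nrm (∑ i, v i • EuclideanSpace.single i (1:ℝ)) := by rw [← aux_decomp]
    _ ≤ ∑ i, nrm (v i • EuclideanSpace.single i (1:ℝ)) := aux_nrm_sum nrm hnrms hnrma _ _
    _ = ∑ i, |v i| * nrm (EuclideanSpace.single i (1:ℝ)) := by simp [hnrms]
    _ ≤ ∑ i, ‖v‖ * nrm (EuclideanSpace.single i (1:ℝ)) := by
        refine Finset.sum_le_sum fun i _ => ?_
        exact mul_le_mul_of_nonneg_right (aux_coord_le v i)
          (aux_nrm_nonneg nrm hnrms hnrma _)
    _ = (∑ i, nrm (EuclideanSpace.single i (1:ℝ))) * ‖v‖ := by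
        rw [Finset.sum_mul]; exact Finset.sum_congr rfl fun i _ => mul_comm _ _

include hnrms hnrma in
lemma aux_nrm_cont : Continuous nrm := by
  obtain ⟨C, hC0, hC⟩ := aux_nrm_upper nrm hnrms hnrma
  rw [Metric.continuous_iff]
  intro b ε hε
  by_cases hCpos : C = 0
  · refine ⟨1, one_pos, fun a _ => ?_⟩
    have h1 : nrm a ≤ 0 := by simpa [hCpos] using hC a
    have h2 : nrm b ≤ 0 := by simpa [hCpos] using hC b
    have h3 := aux_nrm_nonneg nrm hnrms hnrma a
    have h4 := aux_nrm_nonneg nrm hnrms hnrma b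
    simp [Real.dist_eq]
    rw [show nrm a = 0 by linarith, show nrm b = 0 by linarith]
    simpa using hε
  · have hCp : 0 < C := lt_of_le_of_ne hC0 (Ne.symm hCpos)
    refine ⟨ε / C, by positivity, fun a ha => ?_⟩
    have key : ∀ u w : EuclideanSpace ℝ (Fin n), nrm u - nrm w ≤ C * ‖u - w‖ := by
      intro u w
      have := hnrma (u - w) w
      simp only [sub_add_cancel] at this
      have := hC (u - w)
      linarith [hnrma (u - w) w, hC (u - w)]
    rw [Real.dist_eq, abs_sub_lt_iff]
    rw [dist_eq_norm] at ha
    have h1 := key a b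
    have h2 := key b a
    rw [norm_sub_rev] at h2
    have hb : ‖a - b‖ * C < ε := (lt_div_iff₀ hCp).mp ha
    constructor <;> nlinarith

include hnrm0 hnrms hnrma in
lemma aux_nrm_lower : ∃ m : ℝ, 0 < m ∧ ∀ v, m * ‖v‖ ≤ nrm v := by
  rcases subsingleton_or_nontrivial (EuclideanSpace ℝ (Fin n)) with hs | hs
  · exact ⟨1, one_pos, fun v => by
      rw [Subsingleton.elim v 0]; simp [aux_nrm_zero nrm hnrms]⟩
  · have hsph : (Metric.sphere (0 : EuclideanSpace ℝ (Fin n)) 1).Nonempty :=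
      NormedSpace.sphere_nonempty.mpr zero_le_one
    obtain ⟨v₀, hv₀mem, hv₀min⟩ := (isCompact_sphere (0 : EuclideanSpace ℝ (Fin n)) 1).exists_isMinOn
      hsph ((aux_nrm_cont nrm hnrms hnrma).continuousOn)
    have hv₀norm : ‖v₀‖ = 1 := by simpa using hv₀mem
    have hv₀ne : v₀ ≠ 0 := by intro h; rw [h] at hv₀norm; simp at hv₀norm
    have hm : 0 < nrm v₀ := by
      rcases lt_or_eq_of_le (aux_nrm_nonneg nrm hnrms hnrma v₀) with h | h
      · exact h
      · exact absurd ((hnrm0 v₀).mp h.symm) hv₀ne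
    refine ⟨nrm v₀, hm, fun v => ?_⟩
    by_cases hv : v = 0
    · simp [hv, aux_nrm_zero nrm hnrms]
    · have hvn : 0 < ‖v‖ := norm_pos_iff.mpr hv
      have hunit : (‖v‖⁻¹ • v) ∈ Metric.sphere (0 : EuclideanSpace ℝ (Fin n)) 1 := by
        simp [norm_smul, abs_of_pos (inv_pos.mpr hvn), inv_mul_cancel₀ (ne_of_gt hvn)]
      have hmin : nrm v₀ ≤ nrm (‖v‖⁻¹ • v) := hv₀min hunit
      have heq : nrm (‖v‖⁻¹ • v) = ‖v‖⁻¹ * nrm v := by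
        rw [hnrms]; rw [abs_of_pos (inv_pos.mpr hvn)]
      rw [heq] at hmin
      calc nrm v₀ * ‖v‖ ≤ (‖v‖⁻¹ * nrm v) * ‖v‖ :=
            mul_le_mul_of_nonneg_right hmin (le_of_lt hvn)
        _ = nrm v := by field_simp

include hnrm0 hnrms hnrma in
lemma aux_pair (u v : EuclideanSpace ℝ (Fin n)) :
    ⟪u, v⟫ ≤ dualNorm nrm u * nrm v := by
  have hnrm_zero : nrm 0 = 0 := aux_nrm_zero nrm hnrms
  have hnrm_nonneg := aux_nrm_nonneg nrm hnrms hnrma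
  obtain ⟨m, hm, hlow⟩ := aux_nrm_lower nrm hnrm0 hnrms hnrma
  have hbdd : BddAbove {r : ℝ | ∃ z : EuclideanSpace ℝ (Fin n), nrm z ≤ 1 ∧ r = ⟪u, z⟫} := by
    refine ⟨‖u‖ * (1 / m), fun r hr => ?_⟩
    obtain ⟨z, hz1, rfl⟩ := hr
    have hz2 : ‖z‖ ≤ 1 / m := by
      rw [le_div_iff₀ hm]
      have := hlow z
      linarith
    calc ⟪u, z⟫ ≤ ‖u‖ * ‖z‖ := real_inner_le_norm u z
      _ ≤ ‖u‖ * (1 / m) := mul_le_mul_of_nonneg_left hz2 (norm_nonneg u)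
  by_cases hv : v = 0
  · subst hv
    have h0mem : (0 : ℝ) ∈ {r : ℝ | ∃ z : EuclideanSpace ℝ (Fin n), nrm z ≤ 1 ∧ r = ⟪u, z⟫} :=
      ⟨0, by simp [hnrm_zero], by simp⟩
    have h1 : (0:ℝ) ≤ dualNorm nrm u := le_csSup hbdd h0mem
    simp [hnrm_zero]
  · have hnv : 0 < nrm v := by
      rcases lt_or_eq_of_le (hnrm_nonneg v) with h | h
      · exact h
      · exact absurd ((hnrm0 v).mp h.symm) hv
    have hmem : ⟪u, (nrm v)⁻¹ • v⟫ ∈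
        {r : ℝ | ∃ z : EuclideanSpace ℝ (Fin n), nrm z ≤ 1 ∧ r = ⟪u, z⟫} := by
      refine ⟨(nrm v)⁻¹ • v, ?_, rfl⟩
      rw [hnrms, abs_of_pos (inv_pos.mpr hnv), inv_mul_cancel₀ (ne_of_gt hnv)]
    have h1 : ⟪u, (nrm v)⁻¹ • v⟫ ≤ dualNorm nrm u := le_csSup hbdd hmem
    rw [real_inner_smul_right] at h1
    calc ⟪u, v⟫ = ((nrm v)⁻¹ * ⟪u, v⟫) * nrm v := by field_simp
      _ ≤ dualNorm nrm u * nrm v := mul_le_mul_of_nonneg_right h1 (le_of_lt hnv)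
end NrmBasic

lemma aux_opt {X : Set (EuclideanSpace ℝ (Fin n))} (hXcv : Convex ℝ X)
    {ψ : EuclideanSpace ℝ (Fin n) → ℝ} {gu : EuclideanSpace ℝ (Fin n)}
    {g u : EuclideanSpace ℝ (Fin n)}
    (hargmin : IsArgminOver (fun z => ⟪g, z⟫ + ψ z) X u)
    (hgrad : HasGradientAt ψ gu u)
    {z : EuclideanSpace ℝ (Fin n)} (hz : z ∈ X) :
    0 ≤ ⟪g + gu, z - u⟫ := by
  obtain ⟨huX, hmin⟩ := hargmin
  set d := z - u with hd
  have hcurve : ∀ s : ℝ, 0 ≤ s → s ≤ 1 → u + s • d ∈ X := by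
    intro s hs0 hs1
    have := hXcv huX hz (by linarith : (0:ℝ) ≤ 1 - s) hs0 (by ring)
    convert this using 1
    rw [hd]
    module
  have hline : HasDerivAt (fun s : ℝ => u + s • d) d 0 := by
    simpa using ((hasDerivAt_id (0:ℝ)).smul_const d).const_add u
  have hψ : HasDerivAt (fun s : ℝ => ψ (u + s • d)) ⟪gu, d⟫ 0 := by
    have h1 : HasFDerivAt ψ (InnerProductSpace.toDual ℝ _ gu).toContinuousLinearMap u :=
      hgrad.hasFDerivAt
    rw [show u = u + (0:ℝ) • d by simp] at h1
    have := h1.comp_hasDerivAt (0:ℝ) hline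
    simp at this; exact this
  have hin : HasDerivAt (fun s : ℝ => ⟪g, u + s • d⟫) ⟪g, d⟫ 0 := by
    have : (fun s : ℝ => ⟪g, u + s • d⟫) = fun s : ℝ => ⟪g, u⟫ + s * ⟪g, d⟫ := by
      funext s
      rw [inner_add_right, real_inner_smul_right]
    rw [this]
    simpa using ((hasDerivAt_id (0:ℝ)).mul_const ⟪g, d⟫).const_add ⟪g, u⟫
  have hφ : HasDerivAt (fun s : ℝ => ⟪g, u + s • d⟫ + ψ (u + s • d)) (⟪g, d⟫ + ⟪gu, d⟫) 0 :=
    hin.add hψ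
  set φ := fun s : ℝ => ⟪g, u + s • d⟫ + ψ (u + s • d) with hφdef
  have hslope : Filter.Tendsto (slope φ 0) (nhdsWithin 0 (Set.Ioi 0)) (nhds (⟪g, d⟫ + ⟪gu, d⟫)) := by
    have := hasDerivAt_iff_tendsto_slope.mp hφ
    exact this.mono_left (nhdsWithin_mono 0 (fun s hs => ne_of_gt hs))
  have hev : ∀ᶠ s in nhdsWithin (0:ℝ) (Set.Ioi 0), 0 ≤ slope φ 0 s := by
    filter_upwards [Ioc_mem_nhdsGT_of_mem (Set.left_mem_Ico.mpr one_pos)] with s hs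
    have h1 : φ 0 ≤ φ s := by
      have := hmin (u + s • d) (hcurve s (le_of_lt hs.1) hs.2)
      simpa [hφdef] using this
    rw [slope_def_field]
    simp only [sub_zero]
    exact div_nonneg (by linarith) (le_of_lt hs.1)
  have hD : 0 ≤ ⟪g, d⟫ + ⟪gu, d⟫ := ge_of_tendsto hslope hev
  rw [inner_add_left]
  exact hD

lemma aux_young_sq {ε : ℝ} (hε : 0 < ε) (a b : ℝ) : a * b ≤ ε * a^2 + b^2/(4*ε) := by
  have h4 : (0:ℝ) < 4*ε := by positivity
  rw [← sub_nonneg]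
  have key : ε * a^2 + b^2/(4*ε) - a*b = (2*ε*a - b)^2 / (4*ε) := by
    field_simp
    ring
  rw [key]
  positivity

lemma aux_young_pow {ν : ℝ} (hν0 : 0 < ν) (hν1 : ν < 1) {CC lam : ℝ} (hC : 0 ≤ CC)
    (hl : 0 < lam) {r : ℝ} (hr : 0 ≤ r) :
    CC * r ^ (2*ν) ≤ ν * lam * r^2 + (1-ν) * (CC / lam ^ ν) ^ (1/(1-ν)) := by
  have hν1' : 0 < 1 - ν := by linarith
  have hconj : Real.HolderConjugate (1/ν) (1/(1-ν)) := by
    constructor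
    · rw [one_div, inv_inv, one_div, inv_inv, inv_one]; ring
    · positivity
    · positivity
  have hA : (0:ℝ) ≤ (lam * r^2) ^ ν := Real.rpow_nonneg (by positivity) ν
  have hB : (0:ℝ) ≤ CC / lam ^ ν := div_nonneg hC (Real.rpow_nonneg (le_of_lt hl) ν)
  have hy := Real.young_inequality_of_nonneg hA hB hconj
  have hAB : (lam * r^2) ^ ν * (CC / lam ^ ν) = CC * r ^ (2*ν) := by
    rw [Real.mul_rpow (le_of_lt hl) (by positivity)]
    have h2 : (r^2 : ℝ) ^ ν = r ^ (2*ν) := by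
      rw [← Real.rpow_natCast r 2, ← Real.rpow_mul hr]
      norm_num
    rw [h2]
    field_simp
  have hApow : ((lam * r^2) ^ ν) ^ (1/ν) = lam * r^2 := by
    rw [← Real.rpow_mul (by positivity), mul_one_div_cancel (ne_of_gt hν0), Real.rpow_one]
  rw [hAB, hApow] at hy
  calc CC * r ^ (2*ν) ≤ (lam * r^2) / (1/ν) + (CC / lam ^ ν) ^ (1/(1-ν)) / (1/(1-ν)) := hy
    _ = ν * lam * r^2 + (1-ν) * (CC / lam ^ ν) ^ (1/(1-ν)) := by
        rw [div_div_eq_mul_div, div_div_eq_mul_div]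
        field_simp

lemma aux_rpow_subadd {p x y : ℝ} (hx : 0 ≤ x) (hy : 0 ≤ y) (hp0 : 0 ≤ p) (hp1 : p ≤ 1) :
    (x + y) ^ p ≤ x ^ p + y ^ p := by
  have h := NNReal.rpow_add_le_add_rpow (Real.toNNReal x) (Real.toNNReal y) hp0 hp1
  have h2 := NNReal.coe_le_coe.2 h
  push_cast at h2
  rwa [Real.coe_toNNReal x hx, Real.coe_toNNReal y hy] at h2

/-- rewriting the Young constant. -/
lemma aux_const {ν L α γb k : ℝ} (hν0 : 0 < ν) (hν1 : ν < 1) (hL : 0 < L) (hα : 0 < α)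
    (hγb : 0 < γb) (hk : 0 < k) :
    ((2*γb^2*L^2/α) / (α/(k*ν))^ν)^(1/(1-ν)) =
      ((2*k^ν)*L^2*ν^ν/α^(1+ν))^(1/(1-ν)) * (γb^2)^(1/(1-ν)) := by
  have h1 : (α/(k*ν))^ν = α^ν / (k^ν * ν^ν) := by
    rw [Real.div_rpow (le_of_lt hα) (by positivity), Real.mul_rpow (le_of_lt hk) (le_of_lt hν0)]
  have h2 : α^(1+ν) = α * α^ν := by
    rw [Real.rpow_add hα, Real.rpow_one]
  have hbase : (2*γb^2*L^2/α) / (α/(k*ν))^ν = ((2*k^ν)*L^2*ν^ν/α^(1+ν)) * γb^2 := by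
    rw [h1, h2]
    have hαν : (0:ℝ) < α^ν := Real.rpow_pos_of_pos hα ν
    have hkν : (0:ℝ) < k^ν := Real.rpow_pos_of_pos hk ν
    have hνν : (0:ℝ) < ν^ν := Real.rpow_pos_of_pos hν0 ν
    field_simp
  rw [hbase, Real.mul_rpow (by positivity) (by positivity)]

end Aux

set_option maxHeartbeats 1000000 in
/-- deterministic Popov mirror-prox, Hölder continuous monotone mapping,
constant step size `c/(T+1)^a` with known horizon `T`. -/
theorem stmt_16 {n : ℕ}
    (X : Set (EuclideanSpace ℝ (Fin n)))
    (hXne : X.Nonempty) (hXcl : IsClosed X) (hXcv : Convex ℝ X)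
    (nrm : EuclideanSpace ℝ (Fin n) → ℝ)
    (hnrm0 : ∀ x, nrm x = 0 ↔ x = 0)
    (hnrms : ∀ (a : ℝ) (x : EuclideanSpace ℝ (Fin n)), nrm (a • x) = |a| * nrm x)
    (hnrma : ∀ x y, nrm (x + y) ≤ nrm x + nrm y)
    (ψ : EuclideanSpace ℝ (Fin n) → ℝ)
    (gψ : EuclideanSpace ℝ (Fin n) → EuclideanSpace ℝ (Fin n))
    (α : ℝ) (hα : 0 < α)
    (hgrad : ∀ x ∈ X, HasGradientAt ψ (gψ x) x)
    (hgradc : ContinuousOn gψ X)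
    (hsc : ∀ x ∈ X, ∀ z ∈ X, ψ x + ⟪gψ x, z - x⟫ + α / 2 * nrm (z - x) ^ 2 ≤ ψ z)
    (F : EuclideanSpace ℝ (Fin n) → EuclideanSpace ℝ (Fin n))
    (ν L : ℝ) (hν0 : 0 < ν) (hν1 : ν < 1) (hL : 0 < L)
    (hF : ∀ x ∈ X, ∀ y ∈ X, dualNorm nrm (F x - F y) ≤ L * nrm (x - y) ^ ν)
    (hmono : ∀ x ∈ X, ∀ y ∈ X, 0 ≤ ⟪F x - F y, x - y⟫)
    (hXbd : Bornology.IsBounded X)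
    (D : ℝ) (hD : 0 < D) (hDle : ∀ x ∈ X, ∀ z ∈ X, Bpsi ψ gψ z x ≤ D)
    -- the deterministic Popov mirror-prox iterates
    (γ : ℕ → ℝ) (hγpos : ∀ t, 0 < γ t)
    (x y : ℕ → EuclideanSpace ℝ (Fin n))
    (hx0X : x 0 ∈ X) (hy0 : y 0 = x 0)
    (hyit : ∀ t : ℕ,
      IsArgminOver (fun z => ⟪γ t • F (y t) - gψ (x t), z⟫ + ψ z) X (y (t + 1)))
    (hxit : ∀ t : ℕ,
      IsArgminOver (fun z => ⟪γ t • F (y (t + 1)) - gψ (x t), z⟫ + ψ z) X (x (t + 1)))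
    (Chat : ℝ)
    (hChat : Chat = (1 - ν) *
      ((2 ^ (1 + 2 * ν) * L ^ 2 * ν ^ ν / α ^ (1 + ν)) ^ (1 / (1 - ν)) +
        (2 ^ (1 + ν) * L ^ 2 * ν ^ ν / α ^ (1 + ν)) ^ (1 / (1 - ν))))
    (T : ℕ) (c a : ℝ) (hc : 0 < c) (ha0 : 0 < a) (ha1 : a < 1)
    (hγ : ∀ t : ℕ, γ t = c / ((T : ℝ) + 1) ^ a) :
    gapFun X F ((((T : ℝ) + 1)⁻¹) • ∑ t ∈ Finset.range (T + 1), y (t + 1)) ≤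
      D / (c * ((T : ℝ) + 1) ^ (1 - a)) +
        Chat * c ^ ((1 + ν) / (1 - ν)) / ((T : ℝ) + 1) ^ (a * (1 + ν) / (1 - ν)) := by
  have hν1' : 0 < 1 - ν := by linarith
  have hT1 : (0:ℝ) < (T:ℝ) + 1 := by positivity
  have hTa : (0:ℝ) < ((T:ℝ) + 1) ^ a := Real.rpow_pos_of_pos hT1 a
  set γb : ℝ := c / ((T:ℝ) + 1) ^ a with hγbdef
  have hγbp : 0 < γb := by positivity
  -- basic norme facts
  have hnz : nrm 0 = 0 := aux_nrm_zero nrm hnrms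
  have hnn := aux_nrm_nonneg nrm hnrms hnrma
  have hneg := aux_nrm_neg nrm hnrms
  have hpair := aux_pair nrm hnrm0 hnrms hnrma
  -- membership of the iterates
  have hyX : ∀ t, y t ∈ X := by
    intro t
    cases t with
    | zero => rw [hy0]; exact hx0X
    | succ t => exact (hyit t).1
  have hxX : ∀ t, x t ∈ X := by
    intro t
    cases t with
    | zero => exact hx0X
    | succ t => exact (hxit t).1
  -- strong convexity of the Bregman divergence
  have hBsc : ∀ w ∈ X, ∀ v ∈ X, α/2 * nrm (v - w)^2 ≤ Bpsi ψ gψ v w := by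
    intro w hw v hv
    have := hsc w hw v hv
    simp only [Bpsi]
    linarith
  have hB0 : ∀ w ∈ X, ∀ v ∈ X, 0 ≤ Bpsi ψ gψ v w := by
    intro w hw v hv
    have h1 := hBsc w hw v hv
    have h2 : 0 ≤ α/2 * nrm (v - w)^2 := by positivity
    linarith
  -- three-point identity
  have hTP : ∀ u xx z : EuclideanSpace ℝ (Fin n),
      ⟪gψ u - gψ xx, z - u⟫ = Bpsi ψ gψ z xx - Bpsi ψ gψ z u - Bpsi ψ gψ u xx := by
    intro u xx z
    simp only [Bpsi, inner_sub_left, inner_sub_right]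
    ring
  -- expansion identity for the optimality conditions
  have hexp : ∀ (G gx gu zz uu : EuclideanSpace ℝ (Fin n)),
      ⟪γb • G - gx + gu, zz - uu⟫ = γb * ⟪G, zz - uu⟫ + ⟪gu - gx, zz - uu⟫ := by
    intro G gx gu zz uu
    simp only [inner_sub_left, inner_add_left, real_inner_smul_left]
    ring
  -- Young constants
  set K1 : ℝ := (1-ν) * ((2*γb^2*L^2/α) / (α/(4*ν))^ν)^(1/(1-ν)) with hK1def
  set K2 : ℝ := (1-ν) * ((2*γb^2*L^2/α) / (α/(2*ν))^ν)^(1/(1-ν)) with hK2def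
  set K : ℝ := K1 + K2 with hKdef
  -- the per-iteration key inequality
  have key : ∀ z ∈ X, ∀ t : ℕ,
      γb * ⟪F (y (t+1)), y (t+1) - z⟫ ≤
        (Bpsi ψ gψ z (x t) - Bpsi ψ gψ z (x (t+1))) +
        (α/4 * nrm (x t - y t)^2 - α/4 * nrm (x (t+1) - y (t+1))^2) + K := by
    intro z hz t
    have hyit' : IsArgminOver (fun w => ⟪γb • F (y t) - gψ (x t), w⟫ + ψ w) X (y (t+1)) := by
      have := hyit t; rwa [hγ t] at this
    have hxit' : IsArgminOver (fun w => ⟪γb • F (y (t+1)) - gψ (x t), w⟫ + ψ w) X (x (t+1)) := by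
      have := hxit t; rwa [hγ t] at this
    set u := y (t+1) with hu
    set w := x (t+1) with hw
    set xt := x t with hxt
    set yt := y t with hyt
    have huX : u ∈ X := hyX (t+1)
    have hwX : w ∈ X := hxX (t+1)
    have hxtX : xt ∈ X := hxX t
    have hytX : yt ∈ X := hyX t
    set p : ℝ := nrm (u - xt) with hp
    set q : ℝ := nrm (w - u) with hq
    set s : ℝ := nrm (xt - yt) with hs
    have hp0 : 0 ≤ p := hnn _
    have hq0 : 0 ≤ q := hnn _
    have hs0 : 0 ≤ s := hnn _
    -- optimality of w = x (t+1)
    have h1 : γb * ⟪F u, w - z⟫ ≤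
        Bpsi ψ gψ z xt - Bpsi ψ gψ z w - Bpsi ψ gψ w xt := by
      have hopt := aux_opt hXcv hxit' (hgrad w hwX) hz
      rw [hexp, hTP] at hopt
      have : γb * ⟪F u, w - z⟫ = - (γb * ⟪F u, z - w⟫) := by
        rw [show w - z = -(z - w) by abel, inner_neg_right]
        ring
      rw [this]
      linarith
    -- optimality of u = y (t+1), tested at w
    have h2 : γb * ⟪F yt, u - w⟫ ≤
        Bpsi ψ gψ w xt - Bpsi ψ gψ w u - Bpsi ψ gψ u xt := by
      have hopt := aux_opt hXcv hyit' (hgrad u huX) hwX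
      rw [hexp, hTP] at hopt
      have : γb * ⟪F yt, u - w⟫ = - (γb * ⟪F yt, w - u⟫) := by
        rw [show u - w = -(w - u) by abel, inner_neg_right]
        ring
      rw [this]
      linarith
    -- Hölder continuity bound
    have h3 : ⟪F u - F yt, u - w⟫ ≤ L * nrm (u - yt) ^ ν * q := by
      have ha1 := hpair (F u - F yt) (u - w)
      have ha2 := hF u huX yt hytX
      have ha3 : nrm (u - w) = q := by
        rw [hq, show u - w = -(w - u) by abel, hneg]
      calc ⟪F u - F yt, u - w⟫ ≤ dualNorm nrm (F u - F yt) * nrm (u - w) := ha1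
        _ ≤ L * nrm (u - yt) ^ ν * nrm (u - w) := by
            apply mul_le_mul_of_nonneg_right ha2 (hnn _)
        _ = L * nrm (u - yt) ^ ν * q := by rw [ha3]
    -- subadditivity of x ↦ x^ν
    have h4 : nrm (u - yt) ^ ν ≤ p ^ ν + s ^ ν := by
      have hd : nrm (u - yt) ≤ p + s := by
        have := hnrma (u - xt) (xt - yt)
        simpa using this
      calc nrm (u - yt) ^ ν ≤ (p + s) ^ ν :=
            Real.rpow_le_rpow (hnn _) hd (le_of_lt hν0)
        _ ≤ p ^ ν + s ^ ν := aux_rpow_subadd hp0 hs0 (le_of_lt hν0) (le_of_lt hν1)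
    have h34 : γb * ⟪F u - F yt, u - w⟫ ≤ γb * L * q * p ^ ν + γb * L * q * s ^ ν := by
      have hstep : ⟪F u - F yt, u - w⟫ ≤ L * (p ^ ν + s ^ ν) * q := by
        calc ⟪F u - F yt, u - w⟫ ≤ L * nrm (u - yt) ^ ν * q := h3
          _ ≤ L * (p ^ ν + s ^ ν) * q := by
              apply mul_le_mul_of_nonneg_right _ hq0
              exact mul_le_mul_of_nonneg_left h4 (le_of_lt hL)
      calc γb * ⟪F u - F yt, u - w⟫ ≤ γb * (L * (p ^ ν + s ^ ν) * q) :=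
            mul_le_mul_of_nonneg_left hstep (le_of_lt hγbp)
        _ = γb * L * q * p ^ ν + γb * L * q * s ^ ν := by ring
    -- Young square inequalities
    have hpow2 : ∀ r : ℝ, 0 ≤ r → (r ^ ν)^2 = r ^ (2*ν) := by
      intro r hr
      rw [← Real.rpow_natCast (r ^ ν) 2, ← Real.rpow_mul hr]
      norm_num
      rw [mul_comm]
    have h5 : γb * L * q * p ^ ν ≤ α/8 * q^2 + (2*γb^2*L^2/α) * p ^ (2*ν) := by
      have := aux_young_sq (show (0:ℝ) < α/8 by positivity) q (γb * L * p ^ ν)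
      calc γb * L * q * p ^ ν = q * (γb * L * p ^ ν) := by ring
        _ ≤ α/8 * q^2 + (γb * L * p ^ ν)^2/(4*(α/8)) := this
        _ = α/8 * q^2 + (2*γb^2*L^2/α) * (p ^ ν)^2 := by
            field_simp
            ring
        _ = α/8 * q^2 + (2*γb^2*L^2/α) * p ^ (2*ν) := by rw [hpow2 p hp0]
    have h6 : γb * L * q * s ^ ν ≤ α/8 * q^2 + (2*γb^2*L^2/α) * s ^ (2*ν) := by
      have := aux_young_sq (show (0:ℝ) < α/8 by positivity) q (γb * L * s ^ ν)
      calc γb * L * q * s ^ ν = q * (γb * L * s ^ ν) := by ring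
        _ ≤ α/8 * q^2 + (γb * L * s ^ ν)^2/(4*(α/8)) := this
        _ = α/8 * q^2 + (2*γb^2*L^2/α) * (s ^ ν)^2 := by
            field_simp
            ring
        _ = α/8 * q^2 + (2*γb^2*L^2/α) * s ^ (2*ν) := by rw [hpow2 s hs0]
    -- Young power inequalities
    have hCC : (0:ℝ) ≤ 2*γb^2*L^2/α := by positivity
    have h7 : (2*γb^2*L^2/α) * p ^ (2*ν) ≤ α/2 * p^2 + K2 := by
      have := aux_young_pow hν0 hν1 hCC (show (0:ℝ) < α/(2*ν) by positivity) hp0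
      have hnl : ν * (α/(2*ν)) = α/2 := by field_simp
      rw [hnl] at this
      rw [hK2def]
      linarith
    have h8 : (2*γb^2*L^2/α) * s ^ (2*ν) ≤ α/4 * s^2 + K1 := by
      have := aux_young_pow hν0 hν1 hCC (show (0:ℝ) < α/(4*ν) by positivity) hs0
      have hnl : ν * (α/(4*ν)) = α/4 := by field_simp
      rw [hnl] at this
      rw [hK1def]
      linarith
    -- strong convexity terms
    have h9 : α/2 * q^2 ≤ Bpsi ψ gψ w u := hBsc u huX w hwX
    have h10 : α/2 * p^2 ≤ Bpsi ψ gψ u xt := hBsc xt hxtX u huX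
    -- splitting the inner product
    have hsplit : ⟪F u, u - z⟫ = ⟪F u, w - z⟫ + ⟪F yt, u - w⟫ + ⟪F u - F yt, u - w⟫ := by
      simp only [inner_sub_left, inner_sub_right]
      ring
    have hgoal : γb * ⟪F u, u - z⟫ ≤
        (Bpsi ψ gψ z xt - Bpsi ψ gψ z w) + (α/4 * s^2 - α/4 * q^2) + K := by
      have hmul : γb * ⟪F u, u - z⟫ =
          γb * ⟪F u, w - z⟫ + γb * ⟪F yt, u - w⟫ + γb * ⟪F u - F yt, u - w⟫ := by
        rw [hsplit]; ring
      rw [hmul, hKdef]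
      linarith
    exact hgoal
  -- sum over the iterations
  have hzsum : ∀ z ∈ X,
      γb * ∑ t ∈ Finset.range (T+1), ⟪F z, y (t+1) - z⟫ ≤ D + (T+1) * K := by
    intro z hz
    have hstep1 : ∀ t ∈ Finset.range (T+1),
        γb * ⟪F z, y (t+1) - z⟫ ≤ γb * ⟪F (y (t+1)), y (t+1) - z⟫ := by
      intro t _
      apply mul_le_mul_of_nonneg_left _ (le_of_lt hγbp)
      have := hmono (y (t+1)) (hyX (t+1)) z hz
      rw [inner_sub_left] at this
      linarith
    have hstep2 : ∑ t ∈ Finset.range (T+1), γb * ⟪F (y (t+1)), y (t+1) - z⟫ ≤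
        ∑ t ∈ Finset.range (T+1),
          ((Bpsi ψ gψ z (x t) - Bpsi ψ gψ z (x (t+1))) +
            (α/4 * nrm (x t - y t)^2 - α/4 * nrm (x (t+1) - y (t+1))^2) + K) :=
      Finset.sum_le_sum (fun t _ => key z hz t)
    have htel1 : ∑ t ∈ Finset.range (T+1), (Bpsi ψ gψ z (x t) - Bpsi ψ gψ z (x (t+1))) =
        Bpsi ψ gψ z (x 0) - Bpsi ψ gψ z (x (T+1)) :=
      Finset.sum_range_sub' (fun t => Bpsi ψ gψ z (x t)) (T+1)
    have htel2 : ∑ t ∈ Finset.range (T+1),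
        (α/4 * nrm (x t - y t)^2 - α/4 * nrm (x (t+1) - y (t+1))^2) =
        α/4 * nrm (x 0 - y 0)^2 - α/4 * nrm (x (T+1) - y (T+1))^2 :=
      Finset.sum_range_sub' (fun t => α/4 * nrm (x t - y t)^2) (T+1)
    have hsum3 : ∑ t ∈ Finset.range (T+1),
          ((Bpsi ψ gψ z (x t) - Bpsi ψ gψ z (x (t+1))) +
            (α/4 * nrm (x t - y t)^2 - α/4 * nrm (x (t+1) - y (t+1))^2) + K) =
        (Bpsi ψ gψ z (x 0) - Bpsi ψ gψ z (x (T+1))) +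
          (α/4 * nrm (x 0 - y 0)^2 - α/4 * nrm (x (T+1) - y (T+1))^2) + (T+1) * K := by
      rw [Finset.sum_add_distrib, Finset.sum_add_distrib, htel1, htel2]
      simp [Finset.card_range]
    have hx00 : nrm (x 0 - y 0) = 0 := by rw [hy0, sub_self, hnz]
    have hBend : 0 ≤ Bpsi ψ gψ z (x (T+1)) := hB0 (x (T+1)) (hxX (T+1)) z hz
    have hBstart : Bpsi ψ gψ z (x 0) ≤ D := hDle (x 0) hx0X z hz
    have hqend : 0 ≤ α/4 * nrm (x (T+1) - y (T+1))^2 := by positivity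
    calc γb * ∑ t ∈ Finset.range (T+1), ⟪F z, y (t+1) - z⟫
        = ∑ t ∈ Finset.range (T+1), γb * ⟪F z, y (t+1) - z⟫ := by rw [Finset.mul_sum]
      _ ≤ ∑ t ∈ Finset.range (T+1), γb * ⟪F (y (t+1)), y (t+1) - z⟫ :=
          Finset.sum_le_sum hstep1
      _ ≤ (Bpsi ψ gψ z (x 0) - Bpsi ψ gψ z (x (T+1))) +
          (α/4 * nrm (x 0 - y 0)^2 - α/4 * nrm (x (T+1) - y (T+1))^2) + (T+1) * K := by
          rw [← hsum3]; exact hstep2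
      _ ≤ D + (T+1) * K := by
          rw [hx00]
          rw [show ((0:ℝ))^2 = 0 by norm_num]
          linarith [hqend, hBend, hBstart]
  -- the average point bound
  have havg : ∀ z ∈ X,
      ⟪F z, (((T : ℝ) + 1)⁻¹) • (∑ t ∈ Finset.range (T + 1), y (t + 1)) - z⟫ ≤
        D / (γb * ((T:ℝ)+1)) + K / γb := by
    intro z hz
    have hTne : ((T:ℝ) + 1) ≠ 0 := ne_of_gt hT1
    have hid : ⟪F z, (((T : ℝ) + 1)⁻¹) • (∑ t ∈ Finset.range (T + 1), y (t + 1)) - z⟫ =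
        (((T:ℝ)+1)⁻¹) * ∑ t ∈ Finset.range (T+1), ⟪F z, y (t+1) - z⟫ := by
      rw [inner_sub_right, real_inner_smul_right, inner_sum]
      have : ∑ t ∈ Finset.range (T+1), ⟪F z, y (t+1) - z⟫ =
          (∑ t ∈ Finset.range (T+1), ⟪F z, y (t+1)⟫) - ((T:ℝ)+1) * ⟪F z, z⟫ := by
        simp only [inner_sub_right]
        rw [Finset.sum_sub_distrib, Finset.sum_const, Finset.card_range]
        push_cast
        ring
      rw [this]
      field_simp
    rw [hid]
    have hsum := hzsum z hz
    have h1 : ∑ t ∈ Finset.range (T+1), ⟪F z, y (t+1) - z⟫ ≤ (D + (T+1)*K) / γb := by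
      rw [le_div_iff₀ hγbp]
      push_cast at hsum ⊢
      linarith [hsum]
    calc (((T:ℝ)+1)⁻¹) * ∑ t ∈ Finset.range (T+1), ⟪F z, y (t+1) - z⟫
        ≤ (((T:ℝ)+1)⁻¹) * ((D + (T+1)*K) / γb) := by
          apply mul_le_mul_of_nonneg_left h1 (by positivity)
      _ = D / (γb * ((T:ℝ)+1)) + K / γb := by
          push_cast
          field_simp
  -- identification of the constant K with Chat
  have hKChat : K = Chat * (γb^2)^(1/(1-ν)) := by
    have hK1 : K1 = (1-ν) * ((2 ^ (1 + 2*ν) * L ^ 2 * ν ^ ν / α ^ (1 + ν)) ^ (1 / (1 - ν))) *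
        (γb^2)^(1/(1-ν)) := by
      rw [hK1def, aux_const hν0 hν1 hL hα hγbp (show (0:ℝ) < 4 by norm_num)]
      have h4 : (2:ℝ) * 4 ^ ν = 2 ^ (1 + 2*ν) := by
        have : (4:ℝ) ^ ν = 2 ^ (2*ν) := by
          rw [show (4:ℝ) = 2^(2:ℕ) by norm_num, ← Real.rpow_natCast (2:ℝ) 2,
            ← Real.rpow_mul (by norm_num)]
          norm_num
        rw [this, Real.rpow_add (by norm_num : (0:ℝ) < 2), Real.rpow_one]
      rw [h4]
      ring
    have hK2 : K2 = (1-ν) * ((2 ^ (1 + ν) * L ^ 2 * ν ^ ν / α ^ (1 + ν)) ^ (1 / (1 - ν))) *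
        (γb^2)^(1/(1-ν)) := by
      rw [hK2def, aux_const hν0 hν1 hL hα hγbp (show (0:ℝ) < 2 by norm_num)]
      have h4 : (2:ℝ) * 2 ^ ν = 2 ^ (1 + ν) := by
        rw [Real.rpow_add (by norm_num : (0:ℝ) < 2), Real.rpow_one]
      rw [h4]
      ring
    rw [hKdef, hK1, hK2, hChat]
    ring
  -- final arithmetic
  have hRHS : D / (γb * ((T:ℝ)+1)) + K / γb =
      D / (c * ((T : ℝ) + 1) ^ (1 - a)) +
        Chat * c ^ ((1 + ν) / (1 - ν)) / ((T : ℝ) + 1) ^ (a * (1 + ν) / (1 - ν)) := by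
    have e1 : γb * ((T:ℝ)+1) = c * ((T:ℝ)+1) ^ (1-a) := by
      rw [hγbdef, Real.rpow_sub hT1, Real.rpow_one]
      field_simp
    have e2 : K / γb = Chat * c ^ ((1 + ν) / (1 - ν)) / ((T : ℝ) + 1) ^ (a * (1 + ν) / (1 - ν)) := by
      rw [hKChat]
      have hg2 : (γb^2 : ℝ) ^ (1/(1-ν)) = γb ^ (2/(1-ν)) := by
        rw [← Real.rpow_natCast γb 2, ← Real.rpow_mul (le_of_lt hγbp)]
        rw [show ((2:ℕ):ℝ) * (1/(1-ν)) = 2/(1-ν) by push_cast; ring]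
      rw [hg2]
      have hdiv : γb ^ (2/(1-ν)) / γb = γb ^ ((1+ν)/(1-ν)) := by
        have hee : (2:ℝ)/(1-ν) - 1 = (1+ν)/(1-ν) := by field_simp; ring
        calc γb ^ (2/(1-ν)) / γb = γb ^ (2/(1-ν)) / γb ^ (1:ℝ) := by rw [Real.rpow_one]
          _ = γb ^ (2/(1-ν) - 1) := (Real.rpow_sub hγbp _ _).symm
          _ = γb ^ ((1+ν)/(1-ν)) := by rw [hee]
      have hγpow : γb ^ ((1+ν)/(1-ν)) =
          c ^ ((1 + ν) / (1 - ν)) / ((T : ℝ) + 1) ^ (a * (1 + ν) / (1 - ν)) := by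
        rw [hγbdef, Real.div_rpow (le_of_lt hc) (le_of_lt hTa) _,
          ← Real.rpow_mul (le_of_lt hT1)]
        rw [show a * ((1+ν)/(1-ν)) = a * (1+ν)/(1-ν) by ring]
      rw [mul_div_assoc, hdiv, hγpow]
      ring
    rw [e1, e2]
  -- conclude via csSup
  rw [gapFun]
  obtain ⟨z₀, hz₀⟩ := hXne
  apply csSup_le
  · exact ⟨_, z₀, hz₀, rfl⟩
  · rintro r ⟨z, hz, rfl⟩
    rw [← hRHS]
    exact havg z hz
end
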